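/- arXiv:math/0603156 — 9 statements merged into one kernel-verified Lean document; each statement's English description precedes it below -/
import Mathlib

section
/- Let n ≥ 3 and let p : Fin n → EuclideanSpace ℝ (Fin 2) be an injective family of n points in the Euclidean plane. Then there exist pairwise distinct indices i, j, k such that the angle ∠(p i, p j, p k) at p j is at most π / n. -/
open Real EuclideanGeometry Finset

/-!
Identify the plane with `ℂ` and let `O` be the lowest point, ties broken by the real part. Every
other point is seen from `O` under an argument in `[0, π)`, so angles at `O` are differences of
these arguments. If the `n - 1` arguments span at most `(n - 2) π / n`, two of them are within
`π / n` by pigeonhole. Otherwise the two extreme rays enclose an angle of at least `π - 2π / n`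
at `O`, and one of the other two angles of the triangle they span is at most `π / n`.
-/

lemma mem_Icc_min_pred_floor {m : ℕ} (hm : 0 < m) {y : ℝ} (hy : y ∈ Set.Icc 0 (m : ℝ)) :
    y ∈ Set.Icc ((min (m - 1) ⌊y⌋₊ : ℕ) : ℝ) (min (m - 1) ⌊y⌋₊ + 1) := by
  obtain ⟨hy0, hym⟩ := hy
  constructor
  · exact (Nat.cast_le.2 (min_le_right _ _)).trans (Nat.floor_le hy0)
  · rcases min_cases (m - 1) ⌊y⌋₊ with ⟨h, -⟩ | ⟨h, -⟩ <;> rw [h]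
    · rw [Nat.cast_pred hm]; linarith
    · exact (Nat.lt_floor_add_one y).le

theorem exists_ne_abs_sub_le_of_mem_Icc {ι : Type*} {t : Finset ι} {f : ι → ℝ} {a δ : ℝ}
    {m : ℕ} (hδ : 0 < δ) (hm : 0 < m) (hcard : m < #t)
    (hf : ∀ i ∈ t, f i ∈ Set.Icc a (a + m * δ)) :
    ∃ i ∈ t, ∃ j ∈ t, i ≠ j ∧ |f i - f j| ≤ δ := by
  set y : ι → ℝ := fun i => (f i - a) / δ
  have hy : ∀ i ∈ t, y i ∈ Set.Icc 0 (m : ℝ) := fun i hi => by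
    obtain ⟨h1, h2⟩ := hf i hi
    constructor
    · exact div_nonneg (by linarith) hδ.le
    · rw [div_le_iff₀ hδ]; linarith
  -- bins `[k, k + 1)` for `k < m - 1`, and the closed bin `[m - 1, m]`
  obtain ⟨i, hi, j, hj, hij, hbin⟩ := exists_ne_map_eq_of_card_lt_of_maps_to
    (t := range m) (f := fun i => min (m - 1) ⌊y i⌋₊) (by simpa using hcard)
    (fun i _ => by simp only [coe_range, Set.mem_Iio]; omega)
  refine ⟨i, hi, j, hj, hij, ?_⟩
  have hyi := mem_Icc_min_pred_floor hm (hy i hi)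
  have hyj := mem_Icc_min_pred_floor hm (hy j hj)
  rw [hbin] at hyi
  have hy1 : |y i - y j| ≤ 1 :=
    abs_sub_le_iff.2 ⟨by linarith [hyi.2, hyj.1], by linarith [hyi.1, hyj.2]⟩
  have hyij : y i - y j = (f i - f j) / δ := by simp only [y]; ring
  rwa [hyij, abs_div, abs_of_pos hδ, div_le_one hδ] at hy1

lemma Complex.arg_div_eq_sub {x y : ℂ} (hx : x ≠ 0) (hy : y ≠ 0)
    (h : x.arg - y.arg ∈ Set.Ioc (-π) π) : (x / y).arg = x.arg - y.arg := by
  rw [← arg_coe_angle_toReal_eq_arg, arg_div_coe_angle hx hy, ← Real.Angle.coe_sub,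
    Real.Angle.toReal_coe_eq_self_iff.2 h]

lemma Complex.angle_eq_abs_arg_sub {x y : ℂ} (hx : x ≠ 0) (hy : y ≠ 0)
    (h : x.arg - y.arg ∈ Set.Ioc (-π) π) :
    InnerProductGeometry.angle x y = |x.arg - y.arg| := by
  rw [angle_eq_abs_arg hx hy, arg_div_eq_sub hx hy h]

lemma Complex.arg_sub_mem_Ico_of_toLex_lt {w z : ℂ}
    (h : toLex (w.im, w.re) < toLex (z.im, z.re)) :
    (z - w).arg ∈ Set.Ico 0 π := by
  rw [Set.mem_Ico, arg_nonneg_iff, arg_lt_pi_iff, sub_im, sub_re]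
  rcases Prod.Lex.toLex_lt_toLex.1 h with h | ⟨h1, h2⟩
  · exact ⟨by linarith, Or.inr (by linarith)⟩
  · exact ⟨by linarith, Or.inl (by linarith)⟩

lemma Complex.exists_forall_arg_sub_mem_Ico {ι : Type*} [Fintype ι] [Nonempty ι] {q : ι → ℂ}
    (hq : Function.Injective q) : ∃ j, ∀ i ≠ j, (q i - q j).arg ∈ Set.Ico 0 π := by
  obtain ⟨j, -, hj⟩ := exists_min_image univ (fun i => toLex ((q i).im, (q i).re)) univ_nonempty
  refine ⟨j, fun i hij => arg_sub_mem_Ico_of_toLex_lt ((hj i (mem_univ i)).lt_of_ne ?_)⟩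
  intro h
  have h' := Prod.ext_iff.1 (toLex.injective h)
  exact hij (hq (Complex.ext h'.2 h'.1)).symm

lemma EuclideanGeometry.angle_le_or_angle_le_of_pi_sub_two_mul_le_angle {V P : Type*}
    [NormedAddCommGroup V] [InnerProductSpace ℝ V] [MetricSpace P] [NormedAddTorsor V P]
    {p₁ p₂ p₃ : P} (h : p₂ ≠ p₁) {δ : ℝ} (hδ : π - 2 * δ ≤ ∠ p₃ p₁ p₂) :
    ∠ p₁ p₂ p₃ ≤ δ ∨ ∠ p₂ p₃ p₁ ≤ δ := by
  have := angle_add_angle_add_angle_eq_pi p₃ h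
  by_contra! h'
  linarith [h'.1, h'.2]

theorem Complex.exists_angle_le_pi_div {n : ℕ} (hn : 3 ≤ n) {q : Fin n → ℂ}
    (hq : Function.Injective q) :
    ∃ i j k : Fin n, i ≠ j ∧ j ≠ k ∧ i ≠ k ∧ ∠ (q i) (q j) (q k) ≤ π / n := by
  have : NeZero n := ⟨by omega⟩
  obtain ⟨j, hj⟩ := exists_forall_arg_sub_mem_Ico hq
  set φ : Fin n → ℝ := fun i => (q i - q j).arg
  have hangle : ∀ i ≠ j, ∀ k ≠ j, ∠ (q i) (q j) (q k) = |φ i - φ k| := fun i hi k hk =>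
    angle_eq_abs_arg_sub (x := q i - q j) (y := q k - q j) (sub_ne_zero.2 (hq.ne hi))
      (sub_ne_zero.2 (hq.ne hk))
      ⟨by linarith [(hj i hi).1, (hj k hk).2], by linarith [(hj i hi).2, (hj k hk).1]⟩
  set t := univ.erase j
  have ht : #t = n - 1 := by simp [t]
  have ht0 : t.Nonempty := card_pos.1 (by omega)
  obtain ⟨kmin, hkmin, hmin⟩ := exists_min_image t φ ht0
  obtain ⟨kmax, hkmax, hmax⟩ := exists_max_image t φ ht0
  have hn' : (3 : ℝ) ≤ n := by exact_mod_cast hn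
  have hπn : 0 < π / n := by positivity
  have hm : ((n - 2 : ℕ) : ℝ) * (π / n) = π - 2 * (π / n) := by
    rw [Nat.cast_sub (by omega)]; field_simp; ring
  by_cases hW : φ kmax - φ kmin ≤ (n - 2 : ℕ) * (π / n)
  · obtain ⟨i, hi, k, hk, hik, hφ⟩ := exists_ne_abs_sub_le_of_mem_Icc (f := φ) (a := φ kmin)
      (m := n - 2) hπn (by omega) (by omega)
      (fun i hi => ⟨hmin i hi, by linarith [hmax i hi]⟩)
    refine ⟨i, j, k, ne_of_mem_erase hi, (ne_of_mem_erase hk).symm, hik, ?_⟩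
    rwa [hangle i (ne_of_mem_erase hi) k (ne_of_mem_erase hk)]
  · have hwide : π - 2 * (π / n) ≤ ∠ (q kmin) (q j) (q kmax) := by
      rw [hangle kmin (ne_of_mem_erase hkmin) kmax (ne_of_mem_erase hkmax), abs_sub_comm,
        abs_of_nonneg (by linarith [hmin kmax hkmax])]
      linarith
    have hne : kmax ≠ kmin := by
      rintro rfl
      exact hW (by rw [sub_self]; positivity)
    rcases angle_le_or_angle_le_of_pi_sub_two_mul_le_angle
      (hq.ne (ne_of_mem_erase hkmax)) hwide with h | h
    · exact ⟨j, kmax, kmin, (ne_of_mem_erase hkmax).symm, hne, (ne_of_mem_erase hkmin).symm, h⟩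
    · exact ⟨kmax, kmin, j, hne, ne_of_mem_erase hkmin, ne_of_mem_erase hkmax, h⟩

theorem exists_small_angle_plane (n : ℕ) (hn : 3 ≤ n)
    (p : Fin n → EuclideanSpace ℝ (Fin 2)) (hp : Function.Injective p) :
    ∃ i j k : Fin n, i ≠ j ∧ j ≠ k ∧ i ≠ k ∧
      ∠ (p i) (p j) (p k) ≤ π / n := by
  let e := Complex.orthonormalBasisOneI.repr.symm.toLinearIsometry.toAffineIsometry
  obtain ⟨i, j, k, hij, hjk, hik, h⟩ := Complex.exists_angle_le_pi_div hn (q := e ∘ p)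
    (e.injective.comp hp)
  exact ⟨i, j, k, hij, hjk, hik, by simpa only [Function.comp, e.angle_map] using h⟩
end

section
/- Let n ≥ 3 and for k : Fin n let z k = Complex.exp (2 * π * k * Complex.I / n), the vertices of a regular n-gon inscribed in the unit circle (ℂ viewed as a Euclidean plane). Then for all pairwise distinct indices i, j, k, the angle ∠(z i, z j, z k) is at least π / n; moreover there exist pairwise distinct indices i, j, k with ∠(z i, z j, z k) = π / n. -/
open Real EuclideanGeometry
open Complex (I)

lemma two_I_sin (z : ℂ) : 2 * I * Complex.sin z = Complex.exp (z * I) - Complex.exp (-z * I) := by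
  rw [Complex.sin]
  field_simp
  ring_nf
  simp [Complex.I_sq]

lemma exp_sub_exp (a b : ℝ) :
    Complex.exp (2 * a * I) - Complex.exp (2 * b * I)
      = 2 * I * Real.sin (a - b) * Complex.exp ((a + b : ℝ) * I) := by
  rw [Complex.ofReal_sin]
  push_cast
  rw [show (2:ℂ) * I * (Complex.sin (↑a - ↑b)) * Complex.exp ((↑a + ↑b) * I)
      = (2 * I * Complex.sin (↑a - ↑b)) * Complex.exp ((↑a + ↑b) * I) by ring,
    two_I_sin, sub_mul, ← Complex.exp_add, ← Complex.exp_add]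
  ring_nf

lemma arg_exp_I (θ : ℝ) (h : θ ∈ Set.Ioc (-π) π) : Complex.arg (Complex.exp (θ * I)) = θ := by
  rw [Complex.exp_mul_I]
  exact Complex.arg_cos_add_sin_mul_I h

lemma angle_eq_abs_arg (u v : ℂ) (hu : u ≠ 0) (hv : v ≠ 0) :
    InnerProductGeometry.angle u v = |Complex.arg ((starRingEnd ℂ) u * v)| := by
  haveI : Fact (Module.finrank ℝ ℂ = 2) := ⟨Complex.finrank_real_complex⟩
  rw [Complex.orientation.angle_eq_abs_oangle_toReal hu hv, Complex.oangle,
    Complex.arg_coe_angle_toReal_eq_arg]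

lemma conj_mul_aux (s1 s2 c1 c2 : ℝ) :
    (starRingEnd ℂ) (2 * I * (s1:ℂ) * Complex.exp ((c1:ℂ) * I)) * (2 * I * (s2:ℂ) * Complex.exp ((c2:ℂ) * I))
      = ((4 * s1 * s2 : ℝ) : ℂ) * Complex.exp (((c2 - c1 : ℝ) : ℂ) * I) := by
  have h : Complex.exp ((c1:ℂ) * -I) * Complex.exp ((c2:ℂ) * I)
      = Complex.exp (((c2 - c1 : ℝ) : ℂ) * I) := by
    rw [← Complex.exp_add]; congr 1; push_cast; ring
  simp only [map_mul, Complex.conj_I, Complex.conj_ofReal, ← Complex.exp_conj, map_ofNat]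

  rw [← h]
  push_cast
  ring_nf
  simp [Complex.I_sq]

lemma key (n : ℕ) (hn : 3 ≤ n) (z : Fin n → ℂ)
    (hz : ∀ k : Fin n, z k = Complex.exp (2 * π * k * Complex.I / n))
    (i j k : Fin n) (hs1 : Real.sin (π * i / n - π * j / n) ≠ 0)
    (hs2 : Real.sin (π * k / n - π * j / n) ≠ 0) :
    ∠ (z i) (z j) (z k)
      = |Complex.arg (((4 * Real.sin (π * i / n - π * j / n) * Real.sin (π * k / n - π * j / n) : ℝ) : ℂ)
          * Complex.exp (((π * k / n - π * i / n : ℝ) : ℂ) * I))| := by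
  have hn0 : (n:ℂ) ≠ 0 := Nat.cast_ne_zero.mpr (by omega)
  have hz' : ∀ m : Fin n, z m = Complex.exp (2 * ((π * m / n : ℝ) : ℂ) * I) := by
    intro m
    rw [hz]
    congr 1
    push_cast
    field_simp
  have hu : z i - z j = 2 * I * (Real.sin (π * i / n - π * j / n) : ℂ)
      * Complex.exp (((π * i / n + π * j / n : ℝ) : ℂ) * I) := by
    rw [hz' i, hz' j, exp_sub_exp]
  have hv : z k - z j = 2 * I * (Real.sin (π * k / n - π * j / n) : ℂ)
      * Complex.exp (((π * k / n + π * j / n : ℝ) : ℂ) * I) := by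
    rw [hz' k, hz' j, exp_sub_exp]
  have hune : z i - z j ≠ 0 := by
    rw [hu]
    exact mul_ne_zero (mul_ne_zero (mul_ne_zero two_ne_zero Complex.I_ne_zero)
      (Complex.ofReal_ne_zero.mpr hs1)) (Complex.exp_ne_zero _)
  have hvne : z k - z j ≠ 0 := by
    rw [hv]
    exact mul_ne_zero (mul_ne_zero (mul_ne_zero two_ne_zero Complex.I_ne_zero)
      (Complex.ofReal_ne_zero.mpr hs2)) (Complex.exp_ne_zero _)
  rw [EuclideanGeometry.angle, vsub_eq_sub, vsub_eq_sub, angle_eq_abs_arg _ _ hune hvne,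
    hu, hv, conj_mul_aux]
  norm_num

lemma sin_sign (x : ℝ) (h1 : |x| < π) (h0 : x ≠ 0) :
    (0 < x ∧ 0 < Real.sin x) ∨ (x < 0 ∧ Real.sin x < 0) := by
  rcases h0.lt_or_gt with hx | hx
  · right
    refine ⟨hx, ?_⟩
    have h2 : 0 < Real.sin (-x) := Real.sin_pos_of_pos_of_lt_pi (by linarith)
      (by rw [abs_of_neg hx] at h1; linarith)
    rw [Real.sin_neg] at h2; linarith
  · left
    exact ⟨hx, Real.sin_pos_of_pos_of_lt_pi hx (by rwa [abs_of_pos hx] at h1)⟩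

lemma pair_facts (n : ℕ) (hn : 3 ≤ n) (p q : Fin n) (h : p ≠ q) :
    π / n ≤ |π * p / n - π * q / n| ∧ |π * p / n - π * q / n| ≤ π - π / n := by
  have hN : (0:ℝ) < n := by exact_mod_cast Nat.pos_of_ne_zero (by omega)
  have hne : p.val ≠ q.val := fun hh => h (Fin.ext hh)
  have hp := p.isLt
  have hq := q.isLt
  have h1 : 1 ≤ ((p.val:ℤ) - q.val).natAbs := by omega
  have h2 : ((p.val:ℤ) - q.val).natAbs ≤ n - 1 := by omega
  have h3 : |(p.val:ℝ) - q.val| = (((p.val:ℤ) - q.val).natAbs : ℝ) := by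
    rw [Nat.cast_natAbs]; push_cast; ring_nf
  have hd1 : (1:ℝ) ≤ |(p.val:ℝ) - q.val| := by rw [h3]; exact_mod_cast h1
  have hd2 : |(p.val:ℝ) - q.val| ≤ (n:ℝ) - 1 := by
    rw [h3]
    have : ((((p.val:ℤ) - q.val).natAbs : ℕ) : ℝ) ≤ ((n - 1 : ℕ) : ℝ) := by exact_mod_cast h2
    calc ((((p.val:ℤ) - q.val).natAbs : ℕ) : ℝ) ≤ ((n - 1 : ℕ) : ℝ) := this
      _ ≤ (n:ℝ) - 1 := by
          have : ((n - 1 : ℕ) : ℝ) = (n:ℝ) - 1 := by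
            have : 1 ≤ n := by omega
            push_cast [this]; ring
          linarith [this.le]
  rw [show (π * p / n - π * q / n : ℝ) = π * ((p.val:ℝ) - q.val) / n by push_cast; ring,
    abs_div, abs_mul, abs_of_pos Real.pi_pos, abs_of_pos hN]
  constructor
  · calc π / (n:ℝ) = π * 1 / n := by ring
      _ ≤ π * |(p.val:ℝ) - q.val| / n := by gcongr
  · calc π * |(p.val:ℝ) - q.val| / n ≤ π * ((n:ℝ) - 1) / n := by
          gcongr
      _ = π - π / n := by field_simp

lemma ineq_part (n : ℕ) (hn : 3 ≤ n) (z : Fin n → ℂ)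
    (hz : ∀ k : Fin n, z k = Complex.exp (2 * π * k * Complex.I / n))
    (i j k : Fin n) (hij : i ≠ j) (hjk : j ≠ k) (hik : i ≠ k) :
    π / n ≤ ∠ (z i) (z j) (z k) := by
  have hN : (0:ℝ) < n := by exact_mod_cast Nat.pos_of_ne_zero (by omega)
  have hπn : 0 < π / (n:ℝ) := div_pos Real.pi_pos hN
  obtain ⟨l1, u1⟩ := pair_facts n hn i j hij
  obtain ⟨l2, u2⟩ := pair_facts n hn k j (Ne.symm hjk)
  obtain ⟨l3, u3⟩ := pair_facts n hn k i (Ne.symm hik)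
  have hsin1ne : Real.sin (π * i / n - π * j / n) ≠ 0 := by
    rcases sin_sign (π * i / n - π * j / n) (by linarith) (by intro h; rw [h] at l1; simp at l1; linarith) with ⟨_, h⟩ | ⟨_, h⟩
    · exact ne_of_gt h
    · exact ne_of_lt h
  have hsin2ne : Real.sin (π * k / n - π * j / n) ≠ 0 := by
    rcases sin_sign (π * k / n - π * j / n) (by linarith) (by intro h; rw [h] at l2; simp at l2; linarith) with ⟨_, h⟩ | ⟨_, h⟩
    · exact ne_of_gt h
    · exact ne_of_lt h
  rw [key n hn z hz i j k hsin1ne hsin2ne]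
  set x1 : ℝ := π * i / n - π * j / n with hx1
  set x2 : ℝ := π * k / n - π * j / n with hx2
  set γ : ℝ := π * k / n - π * i / n with hγ
  clear_value x1 x2 γ
  have hx1abs : |x1| < π := by linarith
  have hx2abs : |x2| < π := by linarith
  have hx1ne : x1 ≠ 0 := by intro h; rw [h] at l1; simp at l1; linarith
  have hx2ne : x2 ≠ 0 := by intro h; rw [h] at l2; simp at l2; linarith
  have hγne : γ ≠ 0 := by intro h; rw [h] at l3; simp at l3; linarith
  obtain ⟨hγb1, hγb2⟩ := abs_le.mp u3
  have hs1' := sin_sign x1 hx1abs hx1ne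
  have hs2' := sin_sign x2 hx2abs hx2ne
  by_cases hR : 0 < 4 * Real.sin x1 * Real.sin x2
  · rw [Complex.arg_real_mul _ hR, arg_exp_I γ ⟨by linarith, by linarith⟩]
    exact l3
  · have hRneg : 4 * Real.sin x1 * Real.sin x2 < 0 := by
      rcases hs1' with ⟨_, h1⟩ | ⟨_, h1⟩ <;> rcases hs2' with ⟨_, h2⟩ | ⟨_, h2⟩ <;> nlinarith
    rcases hγne.lt_or_gt with hγ0 | hγ0
    · have hrw : ((4 * Real.sin x1 * Real.sin x2 : ℝ) : ℂ) * Complex.exp ((γ:ℝ) * I)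
          = ((-(4 * Real.sin x1 * Real.sin x2) : ℝ) : ℂ) * Complex.exp (((γ + π : ℝ) : ℂ) * I) := by
        rw [show (((γ + π : ℝ)) : ℂ) * I = ((γ:ℝ):ℂ) * I + (π:ℝ) * I by push_cast; ring,
          Complex.exp_add, Complex.exp_pi_mul_I]
        push_cast; ring
      rw [hrw, Complex.arg_real_mul _ (by linarith), arg_exp_I _ ⟨by linarith, by linarith⟩,
        abs_of_pos (by linarith)]
      linarith
    · have hrw : ((4 * Real.sin x1 * Real.sin x2 : ℝ) : ℂ) * Complex.exp ((γ:ℝ) * I)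
          = ((-(4 * Real.sin x1 * Real.sin x2) : ℝ) : ℂ) * Complex.exp (((γ - π : ℝ) : ℂ) * I) := by
        rw [show (((γ - π : ℝ)) : ℂ) * I = ((γ:ℝ):ℂ) * I + (-π:ℝ) * I by push_cast; ring,
          Complex.exp_add]
        rw [show ((-π : ℝ) : ℂ) * I = -((π:ℝ) * I) by push_cast; ring, Complex.exp_neg,
          Complex.exp_pi_mul_I]
        push_cast
        field_simp
      rw [hrw, Complex.arg_real_mul _ (by linarith), arg_exp_I _ ⟨by linarith, by linarith⟩,
        abs_of_neg (by linarith)]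
      linarith

theorem regular_ngon_min_angle (n : ℕ) (hn : 3 ≤ n)
    (z : Fin n → ℂ) (hz : ∀ k : Fin n, z k = Complex.exp (2 * π * k * Complex.I / n)) :
    (∀ i j k : Fin n, i ≠ j → j ≠ k → i ≠ k → π / n ≤ ∠ (z i) (z j) (z k)) ∧
    (∃ i j k : Fin n, i ≠ j ∧ j ≠ k ∧ i ≠ k ∧ ∠ (z i) (z j) (z k) = π / n) := by
  constructor
  · exact fun i j k hij hjk hik => ineq_part n hn z hz i j k hij hjk hik
  · have hN : (0:ℝ) < n := by exact_mod_cast Nat.pos_of_ne_zero (by omega)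
    have hn3 : (3:ℝ) ≤ n := by exact_mod_cast hn
    have hπn : 0 < π / (n:ℝ) := div_pos Real.pi_pos hN
    refine ⟨⟨2, by omega⟩, ⟨0, by omega⟩, ⟨1, by omega⟩,
      by simp [Fin.ext_iff], by simp [Fin.ext_iff], by simp [Fin.ext_iff], ?_⟩
    have e1 : (π * ((⟨2, by omega⟩ : Fin n) : ℕ) / n - π * ((⟨0, by omega⟩ : Fin n) : ℕ) / n : ℝ)
        = 2 * (π / n) := by norm_num; ring
    have e2 : (π * ((⟨1, by omega⟩ : Fin n) : ℕ) / n - π * ((⟨0, by omega⟩ : Fin n) : ℕ) / n : ℝ)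
        = π / n := by norm_num
    have e3 : (π * ((⟨1, by omega⟩ : Fin n) : ℕ) / n - π * ((⟨2, by omega⟩ : Fin n) : ℕ) / n : ℝ)
        = -(π / n) := by norm_num; ring
    have hπn2 : 2 * (π / (n:ℝ)) < π := by
      rw [show 2 * (π / (n:ℝ)) = 2 * π / n by ring, div_lt_iff₀ hN]
      nlinarith [Real.pi_pos]
    have hs1 : Real.sin (π * ((⟨2, by omega⟩ : Fin n) : ℕ) / n - π * ((⟨0, by omega⟩ : Fin n) : ℕ) / n) ≠ 0 := by
      rw [e1]
      exact ne_of_gt (Real.sin_pos_of_pos_of_lt_pi (by linarith) hπn2)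
    have hs2 : Real.sin (π * ((⟨1, by omega⟩ : Fin n) : ℕ) / n - π * ((⟨0, by omega⟩ : Fin n) : ℕ) / n) ≠ 0 := by
      rw [e2]
      exact ne_of_gt (Real.sin_pos_of_pos_of_lt_pi hπn (by linarith))
    rw [key n hn z hz _ _ _ hs1 hs2, e1, e2, e3]
    have hR : 0 < 4 * Real.sin (2 * (π / (n:ℝ))) * Real.sin (π / n) := by
      have := Real.sin_pos_of_pos_of_lt_pi (show (0:ℝ) < 2 * (π/n) by linarith) hπn2
      have := Real.sin_pos_of_pos_of_lt_pi hπn (by linarith)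
      positivity
    rw [Complex.arg_real_mul _ hR, arg_exp_I _ ⟨by linarith, by linarith⟩, abs_of_neg (by linarith),
      neg_neg]
end

section
/- Let n ≥ 3 and let p : Fin n → ℂ be an injective family of n points in the Euclidean plane (ℂ with its standard inner product structure). Suppose every angle ∠(p i, p j, p k) over pairwise distinct indices i, j, k is at least π / n. Then the points form a regular n-gon: there exist a center c ∈ ℂ, a radius r > 0, a unit complex number u, and a bijection σ : Fin n ≃ Fin n such that p (σ k) = c + r * u * Complex.exp (2 * π * k * Complex.I / n) for all k. -/
/-!
Seen from a point `z` of the configuration lying on a supporting line, the other `n - 1` points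
lie in a closed half-plane and their directions are pairwise at least `π / n` apart, so the two
extreme directions span an angle of at least `π - 2π / n`. In the triangle formed by `z` and
these two extreme points the other two angles are at least `π / n`, so all three bounds are
equalities: the extreme points are equidistant from `z`, and the next supporting edge is the
previous one turned by exactly `2π / n`. Walking along supporting edges therefore visits the
points `c + R ζ^k` with `ζ = exp (2πi / n)`, which for `k < n` are `n` distinct points, hence all
of them.
-/

open Real EuclideanGeometry Finset

theorem Finset.card_sub_one_nsmul_le_max'_sub_min' {α : Type*} [AddCommGroup α] [LinearOrder α]
    [IsOrderedAddMonoid α] {d : α} (s : Finset α)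
    (hd : ∀ x ∈ s, ∀ y ∈ s, x < y → d ≤ y - x) (hs : s.Nonempty) :
    (#s - 1) • d ≤ s.max' hs - s.min' hs := by
  induction s using Finset.induction_on_max with
  | empty => exact absurd hs Finset.not_nonempty_empty
  | insert a s hlt ih =>
    rcases s.eq_empty_or_nonempty with rfl | hs'
    · simp
    have ha : a ∉ s := fun h => (hlt a h).false
    have hmax : s.max' hs' < a := hlt _ (s.max'_mem hs')
    have hmin : s.min' hs' < a := (s.min'_le_max' hs').trans_lt hmax
    have hgap : d ≤ a - s.max' hs' :=
      hd _ (mem_insert_of_mem (s.max'_mem hs')) _ (mem_insert_self a s) hmax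
    have ih' := ih (fun x hx y hy => hd x (mem_insert_of_mem hx) y (mem_insert_of_mem hy)) hs'
    have hcard : #s - 1 + 1 = #s := Nat.sub_add_cancel hs'.card_pos
    rw [card_insert_of_notMem ha, Nat.add_sub_cancel, max'_insert a s hs', min'_insert a s hs',
      max_eq_left hmax.le, min_eq_right hmin.le, ← hcard, succ_nsmul]
    calc (#s - 1) • d + d ≤ (s.max' hs' - s.min' hs') + (a - s.max' hs') := add_le_add ih' hgap
      _ = a - s.min' hs' := by abel

theorem Complex.arg_div_of_arg_le {x y : ℂ} (hx : x ≠ 0) (hy : y ≠ 0) (hy0 : 0 ≤ y.arg)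
    (hyx : y.arg ≤ x.arg) : (x / y).arg = x.arg - y.arg := by
  have h := Complex.arg_div_coe_angle hx hy
  rw [← Real.Angle.coe_sub, Complex.arg_coe_angle_eq_iff_eq_toReal] at h
  rw [h, Real.Angle.toReal_coe_eq_self_iff_mem_Ioc]
  constructor <;> linarith [Real.pi_pos, x.arg_le_pi]

theorem Complex.angle_eq_arg_div_sub_arg_div {z u x y : ℂ} (hu : u ≠ 0) (hx : x ≠ z) (hy : y ≠ z)
    (hy0 : 0 ≤ ((y - z) / u).arg) (hyx : ((y - z) / u).arg ≤ ((x - z) / u).arg) :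
    ∠ x z y = ((x - z) / u).arg - ((y - z) / u).arg := by
  have hx' : (x - z) / u ≠ 0 := div_ne_zero (sub_ne_zero.mpr hx) hu
  have hy' : (y - z) / u ≠ 0 := div_ne_zero (sub_ne_zero.mpr hy) hu
  have hscale := Complex.angle_mul_left hu ((x - z) / u) ((y - z) / u)
  rw [mul_div_cancel₀ _ hu, mul_div_cancel₀ _ hu] at hscale
  rw [EuclideanGeometry.angle, vsub_eq_sub, vsub_eq_sub, hscale, Complex.angle_eq_abs_arg hx' hy',
    Complex.arg_div_of_arg_le hx' hy' hy0 hyx, abs_of_nonneg (sub_nonneg.mpr hyx)]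

theorem EuclideanGeometry.angle_eq_and_dist_eq_of_le_angles {V P : Type*} [NormedAddCommGroup V]
    [InnerProductSpace ℝ V] [MetricSpace P] [NormedAddTorsor V P] {a b c : P} (hab : a ≠ b)
    {δ : ℝ} (hδ : 0 < δ) (ha : δ ≤ ∠ b a c) (hc : δ ≤ ∠ a c b) (hb : π - 2 * δ ≤ ∠ a b c) :
    ∠ a b c = π - 2 * δ ∧ dist b a = dist b c := by
  have hsum := angle_add_angle_add_angle_eq_pi c hab.symm
  rw [angle_comm b c a, angle_comm c a b] at hsum
  refine ⟨by linarith, dist_eq_of_angle_eq_angle_of_angle_ne_pi ?_ ?_⟩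
  · rw [angle_comm b c a]; linarith
  · linarith

def AnglesAtLeast (S : Finset ℂ) (θ : ℝ) : Prop :=
  ∀ x ∈ S, ∀ y ∈ S, ∀ z ∈ S, x ≠ y → y ≠ z → x ≠ z → θ ≤ ∠ x y z

/-- All of `S` lies in the closed half-plane to the left of the directed line from `x` to `y`. -/
def IsSupportingEdge (S : Finset ℂ) (x y : ℂ) : Prop :=
  x ∈ S ∧ y ∈ S ∧ x ≠ y ∧ ∀ v ∈ S, 0 ≤ ((v - y) / (y - x)).im

section Vertex

variable {S : Finset ℂ} {z u : ℂ}

theorem isSupportingEdge_of_forall_arg_le {a : ℂ} (hz : z ∈ S) (ha : a ∈ S) (haz : a ≠ z)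
    (hu : u ≠ 0) (ha0 : 0 ≤ ((a - z) / u).arg)
    (hmin : ∀ v ∈ S, v ≠ z → ((a - z) / u).arg ≤ ((v - z) / u).arg) :
    IsSupportingEdge S z a := by
  refine ⟨hz, ha, haz.symm, fun v hv => ?_⟩
  rcases eq_or_ne v z with rfl | hvz
  · rw [← neg_sub, neg_div, div_self (sub_ne_zero.mpr haz)]
    simp
  have hqa : (a - z) / u ≠ 0 := div_ne_zero (sub_ne_zero.mpr haz) hu
  have hqv : (v - z) / u ≠ 0 := div_ne_zero (sub_ne_zero.mpr hvz) hu
  have hquot : (v - a) / (a - z) = (v - z) / u / ((a - z) / u) - 1 := by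
    field_simp [sub_ne_zero.mpr haz]
    ring
  rw [hquot, Complex.sub_im, Complex.one_im, sub_zero, ← Complex.arg_nonneg_iff,
    Complex.arg_div_of_arg_le hqv hqa ha0 (hmin v hv hvz), sub_nonneg]
  exact hmin v hv hvz

theorem AnglesAtLeast.le_arg_sub_arg {θ : ℝ} (hang : AnglesAtLeast S θ) (hz : z ∈ S) (hu : u ≠ 0)
    (hhalf : ∀ v ∈ S, 0 ≤ ((v - z) / u).im) ⦃v w : ℂ⦄ (hv : v ∈ S) (hw : w ∈ S) (hvz : v ≠ z)
    (hwz : w ≠ z) (hvw : v ≠ w) (hle : ((w - z) / u).arg ≤ ((v - z) / u).arg) :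
    θ ≤ ((v - z) / u).arg - ((w - z) / u).arg := by
  rw [← Complex.angle_eq_arg_div_sub_arg_div hu hvz hwz
    (Complex.arg_nonneg_iff.mpr (hhalf w hw)) hle]
  exact hang v hv z hz w hw hvz hwz.symm hvw

theorem AnglesAtLeast.exists_extreme_directions (hS : 3 ≤ #S) (hang : AnglesAtLeast S (π / #S))
    (hz : z ∈ S) (hu : u ≠ 0) (hhalf : ∀ v ∈ S, 0 ≤ ((v - z) / u).im) :
    ∃ a ∈ S, ∃ b ∈ S, a ≠ z ∧ b ≠ z ∧
      (∀ v ∈ S, v ≠ z → ((a - z) / u).arg ≤ ((v - z) / u).arg ∧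
        ((v - z) / u).arg ≤ ((b - z) / u).arg) ∧
      π - 2 * (π / #S) ≤ ((b - z) / u).arg - ((a - z) / u).arg := by
  set φ : ℂ → ℝ := fun v => ((v - z) / u).arg
  have hθ : 0 < π / #S := by positivity
  have hgap := hang.le_arg_sub_arg hz hu hhalf
  have hinj : Set.InjOn φ (S.erase z) := by
    intro v hv w hw hvw
    by_contra hne
    have := hgap (mem_of_mem_erase hv) (mem_of_mem_erase hw) (ne_of_mem_erase hv)
      (ne_of_mem_erase hw) hne hvw.ge
    simp only [φ] at hvw
    linarith
  set T := (S.erase z).image φ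
  have hT : #T = #S - 1 := by rw [card_image_of_injOn hinj, card_erase_of_mem hz]
  have hTne : T.Nonempty := card_pos.mp (by omega)
  obtain ⟨a, ha, hamin⟩ := mem_image.mp (T.min'_mem hTne)
  obtain ⟨b, hb, hbmax⟩ := mem_image.mp (T.max'_mem hTne)
  have hspread : (#T - 1) • (π / #S) ≤ T.max' hTne - T.min' hTne := by
    refine T.card_sub_one_nsmul_le_max'_sub_min' ?_ hTne
    simp only [T, mem_image]
    rintro _ ⟨v, hv, rfl⟩ _ ⟨w, hw, rfl⟩ hlt
    exact hgap (mem_of_mem_erase hw) (mem_of_mem_erase hv) (ne_of_mem_erase hw)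
      (ne_of_mem_erase hv) (fun h => hlt.ne (by rw [h])) hlt.le
  refine ⟨a, mem_of_mem_erase ha, b, mem_of_mem_erase hb, ne_of_mem_erase ha, ne_of_mem_erase hb,
    fun v hv hvz => ?_, ?_⟩
  · have hvT : φ v ∈ T := mem_image_of_mem φ (mem_erase.mpr ⟨hvz, hv⟩)
    change φ a ≤ φ v ∧ φ v ≤ φ b
    rw [hamin, hbmax]
    exact ⟨T.min'_le _ hvT, T.le_max' _ hvT⟩
  · rw [hT, nsmul_eq_mul, Nat.cast_sub (by omega), Nat.cast_sub (by omega)] at hspread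
    have hS0 : (#S : ℝ) ≠ 0 := by positivity
    calc π - 2 * (π / #S) = ((#S : ℝ) - 1 - 1) * (π / #S) := by field_simp; ring
      _ ≤ φ b - φ a := by rw [hamin, hbmax]; push_cast at hspread; exact hspread

theorem AnglesAtLeast.exists_supportingEdge_of_halfPlane (hS : 3 ≤ #S)
    (hang : AnglesAtLeast S (π / #S)) (hz : z ∈ S) (hu : u ≠ 0)
    (hhalf : ∀ v ∈ S, 0 ≤ ((v - z) / u).im) :
    ∃ a, IsSupportingEdge S z a ∧
      (z - u ∈ S → a - z = Complex.exp (2 * π * Complex.I / #S) * u) := by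
  obtain ⟨a, ha, b, hb, haz, hbz, hext, hspread⟩ :=
    hang.exists_extreme_directions hS hz hu hhalf
  set φ : ℂ → ℝ := fun v => ((v - z) / u).arg
  have hθ : 0 < π / #S := by positivity
  have hθ3 : π / #S ≤ π / 3 :=
    div_le_div_of_nonneg_left pi_pos.le (by norm_num) (by exact_mod_cast hS)
  have hφa : 0 ≤ φ a := Complex.arg_nonneg_iff.mpr (hhalf a ha)
  have hab : a ≠ b := by
    rintro rfl
    simp only [sub_self] at hspread
    linarith
  have hangle : ∠ a z b = φ b - φ a := by
    rw [angle_comm]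
    exact Complex.angle_eq_arg_div_sub_arg_div hu hbz haz hφa (hext b hb hbz).1
  obtain ⟨hapex, hdist⟩ := angle_eq_and_dist_eq_of_le_angles haz hθ
    (hang z hz a ha b hb haz.symm hab hbz.symm) (hang a ha b hb z hz hab hbz haz)
    (hangle ▸ hspread)
  refine ⟨a, isSupportingEdge_of_forall_arg_le hz ha haz hu hφa fun v hv hvz => (hext v hv hvz).1,
    fun hzu => ?_⟩
  have hφzu : φ (z - u) = π := by
    simp only [φ, sub_sub_cancel_left, neg_div, div_self hu, Complex.arg_neg_one]
  have hzuz : z - u ≠ z := by simpa using hu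
  have hφb : φ b = π := le_antisymm (Complex.arg_le_pi _) (hφzu ▸ (hext _ hzu hzuz).2)
  have hbzu : b = z - u := by
    by_contra hne
    have := hang.le_arg_sub_arg hz hu hhalf hb hzu hbz hzuz hne
      (by change φ (z - u) ≤ φ b; rw [hφb, hφzu])
    simp only [φ] at hφb hφzu
    linarith
  have hnorm : ‖(a - z) / u‖ = 1 := by
    rw [norm_div, ← dist_eq_norm, dist_comm, hdist, hbzu, dist_eq_norm]
    simp [hu]
  have harg : φ a = 2 * (π / #S) := by linarith
  rw [← div_mul_cancel₀ (a - z) hu, ← Complex.norm_mul_exp_arg_mul_I ((a - z) / u), hnorm]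
  change (1 : ℝ) * Complex.exp (φ a * Complex.I) * u = _
  rw [harg]
  push_cast
  ring_nf

end Vertex

section Walk

variable {S : Finset ℂ}

theorem IsSupportingEdge.exists_next (hS : 3 ≤ #S) (hang : AnglesAtLeast S (π / #S)) {x y : ℂ}
    (h : IsSupportingEdge S x y) :
    ∃ a, IsSupportingEdge S y a ∧ a - y = Complex.exp (2 * π * Complex.I / #S) * (y - x) := by
  obtain ⟨hx, hy, hxy, hhalf⟩ := h
  obtain ⟨a, ha, hrot⟩ :=
    hang.exists_supportingEdge_of_halfPlane hS hy (sub_ne_zero.mpr hxy.symm) hhalf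
  exact ⟨a, ha, hrot (by rwa [sub_sub_cancel])⟩

theorem AnglesAtLeast.exists_supportingEdge (hS : 3 ≤ #S) (hang : AnglesAtLeast S (π / #S)) :
    ∃ x y, IsSupportingEdge S x y := by
  obtain ⟨z, hz, hmin⟩ := S.exists_min_image Complex.re (card_pos.mp (by omega))
  have hhalf : ∀ v ∈ S, 0 ≤ ((v - z) / -Complex.I).im := by
    intro v hv
    simpa [div_neg, Complex.div_I] using hmin v hv
  obtain ⟨a, ha, -⟩ :=
    hang.exists_supportingEdge_of_halfPlane hS hz (neg_ne_zero.mpr Complex.I_ne_zero) hhalf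
  exact ⟨z, a, ha⟩

theorem IsSupportingEdge.add_mul_geom_sum_mem (hS : 3 ≤ #S) (hang : AnglesAtLeast S (π / #S))
    {x y : ℂ} (h : IsSupportingEdge S x y) (k : ℕ) :
    x + (y - x) * ∑ i ∈ range k, Complex.exp (2 * π * Complex.I / #S) ^ i ∈ S := by
  set ζ := Complex.exp (2 * π * Complex.I / #S)
  set Q : ℕ → ℂ := fun k => x + (y - x) * ∑ i ∈ range k, ζ ^ i
  suffices ∀ k, IsSupportingEdge S (Q k) (Q (k + 1)) from (this k).1
  intro k
  induction k with
  | zero => simpa [Q] using h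
  | succ k ih =>
    obtain ⟨a, ha, hrot⟩ := ih.exists_next hS hang
    convert ha using 1
    simp only [Q, sum_range_succ] at hrot ⊢
    linear_combination -hrot

theorem AnglesAtLeast.exists_add_mul_pow_mem (hS : 3 ≤ #S) (hang : AnglesAtLeast S (π / #S)) :
    ∃ c R : ℂ, R ≠ 0 ∧ ∀ k : ℕ, c + R * Complex.exp (2 * π * Complex.I / #S) ^ k ∈ S := by
  obtain ⟨x, y, hxy⟩ := hang.exists_supportingEdge hS
  set ζ := Complex.exp (2 * π * Complex.I / #S)
  have hζ1 : ζ ≠ 1 := (Complex.isPrimitiveRoot_exp _ (by omega)).ne_one (by omega)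
  have hζ1' : ζ - 1 ≠ 0 := sub_ne_zero.mpr hζ1
  refine ⟨x - (y - x) / (ζ - 1), (y - x) / (ζ - 1),
    div_ne_zero (sub_ne_zero.mpr hxy.2.2.1.symm) hζ1', fun k => ?_⟩
  convert hxy.add_mul_geom_sum_mem hS hang k using 1
  rw [geom_sum_eq hζ1]
  field_simp
  ring

end Walk

theorem extremal_config_is_regular_ngon (n : ℕ) (hn : 3 ≤ n)
    (p : Fin n → ℂ) (hp : Function.Injective p)
    (h : ∀ i j k : Fin n, i ≠ j → j ≠ k → i ≠ k → π / n ≤ ∠ (p i) (p j) (p k)) :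
    ∃ (c : ℂ) (r : ℝ) (u : ℂ) (σ : Fin n ≃ Fin n), 0 < r ∧ ‖u‖ = 1 ∧
      ∀ k : Fin n, p (σ k) = c + r * u * Complex.exp (2 * π * k * Complex.I / n) := by
  classical
  set S := univ.image p
  have hS : #S = n := by rw [card_image_of_injective _ hp, card_fin]
  have hang : AnglesAtLeast S (π / #S) := by
    simp only [AnglesAtLeast, S, mem_image, mem_univ, true_and, hS]
    rintro _ ⟨i, rfl⟩ _ ⟨j, rfl⟩ _ ⟨k, rfl⟩ hij hjk hik
    exact h i j k (ne_of_apply_ne p hij) (ne_of_apply_ne p hjk) (ne_of_apply_ne p hik)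
  obtain ⟨c, R, hR, hmem⟩ := hang.exists_add_mul_pow_mem (hS ▸ hn)
  rw [hS] at hmem
  choose σ hσ using fun k : Fin n => (mem_image.mp (hmem k)).imp fun _ => And.right
  have hσinj : Function.Injective σ := by
    intro k k' hkk
    have := congrArg p hkk
    rw [hσ, hσ, add_right_inj, mul_right_inj' hR] at this
    exact Fin.ext ((Complex.isPrimitiveRoot_exp n (by omega)).pow_inj k.isLt k'.isLt this)
  refine ⟨c, ‖R‖, R / ‖R‖, Equiv.ofBijective σ (Finite.injective_iff_bijective.mp hσinj),
    norm_pos_iff.mpr hR, by simp [hR], fun k => ?_⟩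
  have hRn : (‖R‖ : ℂ) ≠ 0 := by exact_mod_cast (norm_pos_iff.mpr hR).ne'
  rw [Equiv.ofBijective_apply, hσ, ← Complex.exp_nat_mul]
  field_simp
end

section
/- Let n ≥ 3. The supremum, over all injective families p : Fin n → EuclideanSpace ℝ (Fin 2) of n points in the Euclidean plane, of the minimum angle min { ∠(p i, p j, p k) : i, j, k pairwise distinct } equals π / n, and this supremum is attained (e.g., by the vertices of a regular n-gon). -/
/-!
At a lowest point `p j` of the configuration, every other point lies in the closed upper
half-plane, so the angles at `p j` are differences of polar angles in `[0, π]`. These `n - 1`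
polar angles are pairwise at least `α` apart, hence two of them, `θ i < θ k`, differ by at least
`(n - 2) α`; the triangle `p i, p j, p k` then has angle sum at least `n α`, so `n α ≤ π`.
Conversely, by the inscribed angle theorem every angle of the regular `n`-gon is a positive
multiple of `π / n`.
-/

open Real EuclideanGeometry RealInnerProductSpace
open InnerProductGeometry hiding angle

noncomputable def circlePoint (θ : ℝ) : EuclideanSpace ℝ (Fin 2) := !₂[cos θ, sin θ]

lemma inner_circlePoint (s t : ℝ) : ⟪circlePoint s, circlePoint t⟫ = cos (s - t) := by
  simp only [circlePoint, PiLp.inner_apply, RCLike.inner_apply, ringHom_apply, Fin.sum_univ_two,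
    Matrix.cons_val_zero, Matrix.cons_val_one, cos_sub]
  ring

lemma norm_circlePoint (θ : ℝ) : ‖circlePoint θ‖ = 1 := by
  rw [norm_eq_sqrt_real_inner, inner_circlePoint, sub_self, cos_zero, sqrt_one]

lemma angle_circlePoint {s t : ℝ} (h : |s - t| ≤ π) :
    InnerProductGeometry.angle (circlePoint s) (circlePoint t) = |s - t| := by
  rw [InnerProductGeometry.angle, inner_circlePoint, norm_circlePoint, norm_circlePoint, mul_one,
    div_one, ← cos_abs, arccos_cos (abs_nonneg _) h]

lemma circlePoint_add_sub (b s : ℝ) :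
    circlePoint (b + s) - circlePoint b = (2 * sin (s / 2)) • circlePoint (b + (s + π) / 2) := by
  have h₀ := cos_sub_cos (b + s) b
  have h₁ := sin_sub_sin (b + s) b
  rw [add_sub_cancel_left] at h₀ h₁
  have e : b + (s + π) / 2 = (b + s + b) / 2 + π / 2 := by ring
  ext i
  fin_cases i <;> simp [circlePoint, e, cos_add_pi_div_two, sin_add_pi_div_two] <;> linarith

lemma circlePoint_add_nat_mul_two_pi (θ : ℝ) (k : ℕ) :
    circlePoint (θ + k * (2 * π)) = circlePoint θ := by
  simp only [circlePoint, cos_add_nat_mul_two_pi, sin_add_nat_mul_two_pi]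

lemma two_mul_sin_half_pos {s : ℝ} (hs : s ∈ Set.Ioo 0 (2 * π)) : 0 < 2 * sin (s / 2) :=
  mul_pos two_pos (sin_pos_of_pos_of_lt_pi (by linarith [hs.1]) (by linarith [hs.2]))

lemma angle_circlePoint_add {b s t : ℝ} (hs : s ∈ Set.Ioo 0 (2 * π))
    (ht : t ∈ Set.Ioo 0 (2 * π)) :
    ∠ (circlePoint (b + s)) (circlePoint b) (circlePoint (b + t)) = |s - t| / 2 := by
  have e : b + (s + π) / 2 - (b + (t + π) / 2) = (s - t) / 2 := by ring
  rw [EuclideanGeometry.angle, vsub_eq_sub, vsub_eq_sub, circlePoint_add_sub, circlePoint_add_sub,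
    angle_smul_left_of_pos _ _ (two_mul_sin_half_pos hs),
    angle_smul_right_of_pos _ _ (two_mul_sin_half_pos ht), angle_circlePoint] <;> rw [e]
  · rw [abs_div, abs_two]
  · rw [abs_le]
    constructor <;> linarith [hs.1, hs.2, ht.1, ht.2]

lemma norm_smul_circlePoint_angle_single {v : EuclideanSpace ℝ (Fin 2)} (hv : 0 ≤ v 1) :
    ‖v‖ • circlePoint (InnerProductGeometry.angle (EuclideanSpace.single 0 1) v) = v := by
  have hcos := cos_angle_mul_norm_mul_norm (EuclideanSpace.single 0 1) v
  have hsin := sin_angle_mul_norm_mul_norm (EuclideanSpace.single 0 1) v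
  have hnorm : ‖v‖ ^ 2 = v 0 ^ 2 + v 1 ^ 2 := by
    rw [EuclideanSpace.real_norm_sq_eq, Fin.sum_univ_two]
  have he : ‖(EuclideanSpace.single 0 1 : EuclideanSpace ℝ (Fin 2))‖ = 1 := by simp
  have hev : ⟪EuclideanSpace.single 0 1, v⟫ = v 0 := by simp [EuclideanSpace.inner_single_left]
  rw [real_inner_self_eq_norm_sq, real_inner_self_eq_norm_sq, he, hev, hnorm] at hsin
  rw [he, hev] at hcos
  rw [show (1 : ℝ) ^ 2 * (v 0 ^ 2 + v 1 ^ 2) - v 0 * v 0 = v 1 ^ 2 by ring, sqrt_sq hv] at hsin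
  ext i
  fin_cases i <;> simp [circlePoint] <;> linarith

lemma angle_eq_abs_sub_angle_single {v w : EuclideanSpace ℝ (Fin 2)} (hv : v ≠ 0) (hw : w ≠ 0)
    (hv₁ : 0 ≤ v 1) (hw₁ : 0 ≤ w 1) :
    InnerProductGeometry.angle v w =
      |InnerProductGeometry.angle (EuclideanSpace.single 0 1) v -
        InnerProductGeometry.angle (EuclideanSpace.single 0 1) w| := by
  set e : EuclideanSpace ℝ (Fin 2) := EuclideanSpace.single 0 1
  conv_lhs =>
    rw [← norm_smul_circlePoint_angle_single hv₁, ← norm_smul_circlePoint_angle_single hw₁]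
  rw [angle_smul_left_of_pos _ _ (norm_pos_iff.2 hv),
    angle_smul_right_of_pos _ _ (norm_pos_iff.2 hw), angle_circlePoint]
  rw [abs_le]
  constructor <;> linarith [InnerProductGeometry.angle_nonneg e v,
    InnerProductGeometry.angle_le_pi e v, InnerProductGeometry.angle_nonneg e w,
    InnerProductGeometry.angle_le_pi e w]

lemma exists_card_sub_one_mul_le_sub {ι : Type*} [DecidableEq ι] (f : ι → ℝ) {α : ℝ}
    {s : Finset ι} (hs : s.Nonempty) (hsep : ∀ i ∈ s, ∀ j ∈ s, i ≠ j → α ≤ |f i - f j|) :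
    ∃ i ∈ s, ∃ j ∈ s, ((s.card : ℝ) - 1) * α ≤ f j - f i := by
  induction s using Finset.induction_on_max_value f with
  | empty => exact absurd hs Finset.not_nonempty_empty
  | insert a s ha hmax ih =>
    rcases s.eq_empty_or_nonempty with rfl | hs'
    · exact ⟨a, by simp, a, by simp, by simp⟩
    obtain ⟨i, hi, j, hj, hij⟩ := ih hs' fun x hx y hy hxy =>
      hsep x (Finset.mem_insert_of_mem hx) y (Finset.mem_insert_of_mem hy) hxy
    have hja : α ≤ f a - f j := by
      have := hsep a (Finset.mem_insert_self a s) j (Finset.mem_insert_of_mem hj)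
        (fun h => ha (h ▸ hj))
      rwa [abs_of_nonneg (sub_nonneg.2 (hmax j hj))] at this
    refine ⟨i, Finset.mem_insert_of_mem hi, a, Finset.mem_insert_self a s, ?_⟩
    rw [Finset.card_insert_of_notMem ha, Nat.cast_succ]
    linarith

lemma card_mul_le_pi_of_le_angle {n : ℕ} (hn : 3 ≤ n) {p : Fin n → EuclideanSpace ℝ (Fin 2)}
    (hp : Function.Injective p) {α : ℝ}
    (hα : ∀ i j k, i ≠ j → j ≠ k → i ≠ k → α ≤ ∠ (p i) (p j) (p k)) : n * α ≤ π := by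
  rcases le_or_gt α 0 with hα₀ | hα₀
  · nlinarith [pi_pos]
  have : Nonempty (Fin n) := ⟨⟨0, by omega⟩⟩
  obtain ⟨j, hj⟩ := Finite.exists_min fun i => p i 1
  set θ : Fin n → ℝ := fun i => InnerProductGeometry.angle (EuclideanSpace.single 0 1) (p i - p j)
  have hθ {i k : Fin n} (hi : i ≠ j) (hk : k ≠ j) : ∠ (p i) (p j) (p k) = |θ i - θ k| :=
    angle_eq_abs_sub_angle_single (sub_ne_zero.2 (hp.ne hi)) (sub_ne_zero.2 (hp.ne hk))
      (by simpa using hj i) (by simpa using hj k)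
  have hcard : (Finset.univ.erase j).card = n - 1 := by
    rw [Finset.card_erase_of_mem (Finset.mem_univ j), Finset.card_univ, Fintype.card_fin]
  obtain ⟨i, hi_mem, k, hk_mem, hspread⟩ := exists_card_sub_one_mul_le_sub θ
    (s := Finset.univ.erase j) (Finset.card_pos.1 (by omega)) fun i hi k hk hik => by
      have hi := Finset.ne_of_mem_erase hi
      have hk := Finset.ne_of_mem_erase hk
      exact hθ hi hk ▸ hα i j k hi hk.symm hik
  have hi : i ≠ j := Finset.ne_of_mem_erase hi_mem
  have hk : k ≠ j := Finset.ne_of_mem_erase hk_mem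
  have hn' : (3 : ℝ) ≤ n := by exact_mod_cast hn
  rw [hcard, Nat.cast_pred (by omega)] at hspread
  have hik : i ≠ k := by
    rintro rfl
    nlinarith
  have hj_angle : (n - 2) * α ≤ ∠ (p i) (p j) (p k) := by
    rw [hθ hi hk]
    linarith [le_abs_self (θ k - θ i), abs_sub_comm (θ i) (θ k)]
  have hsum := angle_add_angle_add_angle_eq_pi (p k) (hp.ne hi.symm)
  linarith [hα j k i hk.symm hik.symm hi.symm, hα k i j hik.symm hi hk]

lemma circlePoint_add_ne {b s : ℝ} (hs : s ∈ Set.Ioo 0 (2 * π)) :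
    circlePoint (b + s) ≠ circlePoint b := by
  intro h
  have hnorm := congrArg norm (circlePoint_add_sub b s)
  rw [h, sub_self, norm_zero, norm_smul, norm_circlePoint, mul_one, Real.norm_eq_abs,
    abs_of_pos (two_mul_sin_half_pos hs)] at hnorm
  exact (two_mul_sin_half_pos hs).ne hnorm

noncomputable def regularPolygon (n : ℕ) (i : Fin n) : EuclideanSpace ℝ (Fin 2) :=
  circlePoint (2 * π * i / n)

section regularPolygon

variable {n : ℕ} [NeZero n]

lemma regularPolygon_eq_add_sub (i j : Fin n) :
    regularPolygon n i = circlePoint (2 * π * j / n + 2 * π * (i - j : Fin n) / n) := by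
  set m := (j : ℕ) + (i - j : Fin n)
  have hi : (i : ℕ) = m % n := by rw [← Fin.val_add, add_sub_cancel]
  have hm : (m : ℝ) = i + n * (m / n : ℕ) := by
    rw [hi]
    exact_mod_cast (Nat.mod_add_div m n).symm
  have harg : 2 * π * j / n + 2 * π * (i - j : Fin n) / n =
      2 * π * i / n + (m / n : ℕ) * (2 * π) := by
    have hn : (n : ℝ) ≠ 0 := NeZero.ne _
    calc _ = 2 * π * m / n := by simp only [m, Nat.cast_add]; ring
      _ = _ := by rw [hm]; field_simp
  rw [harg, circlePoint_add_nat_mul_two_pi, regularPolygon]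

lemma two_pi_mul_sub_div_mem_Ioo {i j : Fin n} (h : i ≠ j) :
    2 * π * (i - j : Fin n) / n ∈ Set.Ioo 0 (2 * π) := by
  have hn : (0 : ℝ) < n := by exact_mod_cast NeZero.pos n
  have hpos : (0 : ℝ) < (i - j : Fin n) := by
    exact_mod_cast Nat.pos_of_ne_zero (Fin.val_ne_zero_iff.2 (sub_ne_zero.2 h))
  have hlt : ((i - j : Fin n) : ℝ) < n := by exact_mod_cast (i - j).isLt
  constructor
  · positivity
  · rw [div_lt_iff₀ hn]
    nlinarith [pi_pos]

lemma regularPolygon_injective : Function.Injective (regularPolygon n) := by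
  intro i j h
  by_contra hij
  rw [regularPolygon_eq_add_sub i j] at h
  exact circlePoint_add_ne (two_pi_mul_sub_div_mem_Ioo hij) h

lemma angle_regularPolygon {i j k : Fin n} (hij : i ≠ j) (hkj : k ≠ j) :
    ∠ (regularPolygon n i) (regularPolygon n j) (regularPolygon n k) =
      π * |((i - j : Fin n) : ℝ) - (k - j : Fin n)| / n := by
  have hn : (0 : ℝ) < n := by exact_mod_cast NeZero.pos n
  rw [regularPolygon_eq_add_sub i j, regularPolygon_eq_add_sub k j, regularPolygon,
    angle_circlePoint_add (two_pi_mul_sub_div_mem_Ioo hij) (two_pi_mul_sub_div_mem_Ioo hkj)]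
  set d : ℝ := (((i - j : Fin n) : ℕ) : ℝ)
  set e : ℝ := (((k - j : Fin n) : ℕ) : ℝ)
  rw [show 2 * π * d / n - 2 * π * e / n = 2 * (π / n) * (d - e) by ring, abs_mul, abs_mul,
    abs_two, abs_of_pos (by positivity : 0 < π / n)]
  ring

lemma pi_div_le_angle_regularPolygon {i j k : Fin n} (hij : i ≠ j) (hkj : k ≠ j)
    (hik : i ≠ k) :
    π / n ≤ ∠ (regularPolygon n i) (regularPolygon n j) (regularPolygon n k) := by
  have hn : (0 : ℝ) < n := by exact_mod_cast NeZero.pos n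
  have hsub : (i - j : Fin n) ≠ k - j := fun h => hik (sub_left_injective h)
  have hone : (1 : ℝ) ≤ |((i - j : Fin n) : ℝ) - (k - j : Fin n)| := by
    have : (1 : ℤ) ≤ |((i - j : Fin n) : ℤ) - (k - j : Fin n)| :=
      Int.one_le_abs (sub_ne_zero.2 (by exact_mod_cast Fin.val_injective.ne hsub))
    exact_mod_cast this
  rw [angle_regularPolygon hij hkj]
  gcongr
  nlinarith [pi_pos]

end regularPolygon

theorem maximin_angle_plane (n : ℕ) (hn : 3 ≤ n) :
    IsGreatest {α : ℝ | ∃ p : Fin n → EuclideanSpace ℝ (Fin 2), Function.Injective p ∧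
      IsLeast {θ : ℝ | ∃ i j k : Fin n, i ≠ j ∧ j ≠ k ∧ i ≠ k ∧
        θ = ∠ (p i) (p j) (p k)} α} (π / n) := by
  have : NeZero n := ⟨by omega⟩
  have hn₀ : (0 : ℝ) < n := by positivity
  refine ⟨⟨regularPolygon n, regularPolygon_injective, ?_, ?_⟩, ?_⟩
  · refine ⟨⟨1, by omega⟩, ⟨0, by omega⟩, ⟨2, by omega⟩, by simp [Fin.ext_iff],
      by simp [Fin.ext_iff], by simp [Fin.ext_iff], ?_⟩
    rw [angle_regularPolygon (by simp [Fin.ext_iff]) (by simp [Fin.ext_iff])]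
    norm_num
  · rintro θ ⟨i, j, k, hij, hjk, hik, rfl⟩
    exact pi_div_le_angle_regularPolygon hij hjk.symm hik
  · rintro α ⟨p, hp, -, hα⟩
    rw [le_div_iff₀ hn₀, mul_comm]
    exact card_mul_le_pi_of_le_angle hn hp fun i j k hij hjk hik =>
      hα ⟨i, j, k, hij, hjk, hik, rfl⟩
end

section
/- Let n ≥ 3 and for k ∈ {0, …, n−1} let z k = Complex.exp (2 * π * k * Complex.I / n) be the vertices of the standard regular n-gon in ℂ. Then for all natural numbers i < j < k ≤ n − 1, the angle at z j in the triangle with vertices z i, z j, z k satisfies ∠(z i, z j, z k) = (n − (k − i)) * π / n. -/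
open Real EuclideanGeometry

lemma exp_I_sub_exp_I (x y : ℝ) :
    Complex.exp ((x : ℂ) * Complex.I) - Complex.exp ((y : ℂ) * Complex.I)
      = Complex.exp ((((x + y) / 2 : ℝ) : ℂ) * Complex.I)
        * (2 * ((Real.sin ((x - y) / 2) : ℝ) : ℂ) * Complex.I) := by
  have h1 : (x : ℂ) * Complex.I
      = (((x + y) / 2 : ℝ) : ℂ) * Complex.I + (((x - y) / 2 : ℝ) : ℂ) * Complex.I := by
    push_cast; ring
  have h2 : (y : ℂ) * Complex.I
      = (((x + y) / 2 : ℝ) : ℂ) * Complex.I + ((-((x - y) / 2) : ℝ) : ℂ) * Complex.I := by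
    push_cast; ring
  rw [h1, h2, Complex.exp_add, Complex.exp_add, ← mul_sub]
  congr 1
  rw [Complex.exp_mul_I, Complex.exp_mul_I, Complex.ofReal_neg, Complex.cos_neg,
    Complex.sin_neg, Complex.ofReal_sin]
  ring

lemma conj_exp_I (x : ℝ) :
    (starRingEnd ℂ) (Complex.exp ((x : ℂ) * Complex.I))
      = Complex.exp (((-x : ℝ) : ℂ) * Complex.I) := by
  rw [← Complex.exp_conj, map_mul, Complex.conj_ofReal, Complex.conj_I]
  congr 1
  push_cast
  ring

set_option maxHeartbeats 1000000 in
theorem regular_ngon_angle_formula (n : ℕ) (hn : 3 ≤ n)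
    (z : ℕ → ℂ) (hz : ∀ k : ℕ, z k = Complex.exp (2 * π * k * Complex.I / n))
    (i j k : ℕ) (hij : i < j) (hjk : j < k) (hk : k ≤ n - 1) :
    ∠ (z i) (z j) (z k) = ((n - (k - i) : ℕ) : ℝ) * π / n := by
  have hπ := Real.pi_pos
  have hn0' : 0 < n := by omega
  have hn0 : (0 : ℝ) < n := by exact_mod_cast hn0'
  have hkn : k < n := by omega
  have hiR : (i : ℝ) < j := by exact_mod_cast hij
  have hjR : (j : ℝ) < k := by exact_mod_cast hjk
  have hkR : (k : ℝ) < n := by exact_mod_cast hkn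
  have hi0 : (0 : ℝ) ≤ i := Nat.cast_nonneg i
  have hz' : ∀ m : ℕ, z m = Complex.exp (((2 * π * m / n : ℝ) : ℂ) * Complex.I) := by
    intro m; rw [hz m]; congr 1; push_cast; ring
  set α : ℝ := π * ((j : ℝ) - i) / n with hα
  set β : ℝ := π * ((k : ℝ) - j) / n with hβ
  set δ : ℝ := π * ((k : ℝ) - i) / n with hδ
  have h0α : 0 < α := by rw [hα]; apply div_pos _ hn0; nlinarith
  have hαπ : α < π := by rw [hα, div_lt_iff₀ hn0]; nlinarith
  have h0β : 0 < β := by rw [hβ]; apply div_pos _ hn0; nlinarith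
  have hβπ : β < π := by rw [hβ, div_lt_iff₀ hn0]; nlinarith
  have h0δ : 0 < δ := by rw [hδ]; apply div_pos _ hn0; nlinarith
  have hδπ : δ < π := by rw [hδ, div_lt_iff₀ hn0]; nlinarith
  have hsinα : 0 < Real.sin α := Real.sin_pos_of_pos_of_lt_pi h0α hαπ
  have hsinβ : 0 < Real.sin β := Real.sin_pos_of_pos_of_lt_pi h0β hβπ
  have e1 : (2 * π * (i : ℝ) / n - 2 * π * (j : ℝ) / n) / 2 = -α := by rw [hα]; ring
  have e2 : (2 * π * (k : ℝ) / n - 2 * π * (j : ℝ) / n) / 2 = β := by rw [hβ]; ring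
  have hu : z i - z j
      = Complex.exp ((((2 * π * (i : ℝ) / n + 2 * π * (j : ℝ) / n) / 2 : ℝ) : ℂ) * Complex.I)
        * (2 * ((Real.sin (-α) : ℝ) : ℂ) * Complex.I) := by
    rw [hz' i, hz' j, exp_I_sub_exp_I, e1]
  have hv : z k - z j
      = Complex.exp ((((2 * π * (k : ℝ) / n + 2 * π * (j : ℝ) / n) / 2 : ℝ) : ℂ) * Complex.I)
        * (2 * ((Real.sin β : ℝ) : ℂ) * Complex.I) := by
    rw [hz' k, hz' j, exp_I_sub_exp_I, e2]
  have hu0 : z i - z j ≠ 0 := by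
    rw [hu]
    refine mul_ne_zero (Complex.exp_ne_zero _)
      (mul_ne_zero (mul_ne_zero two_ne_zero ?_) Complex.I_ne_zero)
    exact Complex.ofReal_ne_zero.mpr (by rw [Real.sin_neg]; exact neg_ne_zero.mpr hsinα.ne')
  have hv0 : z k - z j ≠ 0 := by
    rw [hv]
    refine mul_ne_zero (Complex.exp_ne_zero _)
      (mul_ne_zero (mul_ne_zero two_ne_zero ?_) Complex.I_ne_zero)
    exact Complex.ofReal_ne_zero.mpr hsinβ.ne'
  have hmπ : Complex.exp (((-π : ℝ) : ℂ) * Complex.I) = -1 := by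
    push_cast
    rw [neg_mul, Complex.exp_neg, Complex.exp_pi_mul_I]
    norm_num
  have hexp : Complex.exp (((δ - π : ℝ) : ℂ) * Complex.I)
      = Complex.exp (((-((2 * π * (i : ℝ) / n + 2 * π * (j : ℝ) / n) / 2) : ℝ) : ℂ) * Complex.I)
        * Complex.exp ((((2 * π * (k : ℝ) / n + 2 * π * (j : ℝ) / n) / 2 : ℝ) : ℂ) * Complex.I)
        * Complex.exp (((-π : ℝ) : ℂ) * Complex.I) := by
    rw [← Complex.exp_add, ← Complex.exp_add]
    congr 1
    rw [hδ]
    push_cast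
    ring
  have hconj : (starRingEnd ℂ) (z i - z j) * (z k - z j)
      = ((4 * Real.sin α * Real.sin β : ℝ) : ℂ)
        * Complex.exp (((δ - π : ℝ) : ℂ) * Complex.I) := by
    rw [hu, hv, map_mul, conj_exp_I, hexp, hmπ]
    simp only [map_mul, Complex.conj_I, Complex.conj_ofReal, map_ofNat]
    rw [Real.sin_neg]
    push_cast
    ring_nf
    rw [Complex.I_sq]
    ring
  have harg : Complex.arg ((starRingEnd ℂ) (z i - z j) * (z k - z j)) = δ - π := by
    rw [hconj, Complex.arg_real_mul _ (by nlinarith : (0 : ℝ) < 4 * Real.sin α * Real.sin β),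
      Complex.exp_mul_I, Complex.arg_cos_add_sin_mul_I ⟨by linarith, by linarith⟩]
  have hcast : ((n - (k - i) : ℕ) : ℝ) = (n : ℝ) - ((k : ℝ) - i) := by
    have h1 : k - i ≤ n := by omega
    have h2 : i ≤ k := by omega
    rw [Nat.cast_sub h1, Nat.cast_sub h2]
  haveI : Fact (Module.finrank ℝ ℂ = 2) := ⟨Complex.finrank_real_complex⟩
  rw [EuclideanGeometry.angle, vsub_eq_sub, vsub_eq_sub,
    Complex.orientation.angle_eq_abs_oangle_toReal hu0 hv0, Complex.oangle, harg,
    Real.Angle.toReal_coe_eq_self_iff.mpr ⟨by linarith, by linarith⟩,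
    abs_of_nonpos (by linarith), hcast, hδ]
  field_simp
  ring
end

section
/- Let n ≥ 3 and let p : Fin n → EuclideanSpace ℝ (Fin 2) be an injective family of n points such that every angle ∠(p i, p j, p k) over pairwise distinct indices i, j, k is at least π / n. Then the points are in strictly convex position: for every index i, the point p i does not lie in the convex hull of the remaining points { p j : j ≠ i }. -/
/-!
Identify the plane with `ℂ` and suppose `z i` lies in the convex hull of the other points. For a
direction `ω`, the functional `Re (· * ω)` attains its maximum over the configuration at some
`v ≠ i`. If the same `v` is maximal for `ω` and for `ω * exp (δ I)` with `0 < δ < π`, the other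
`n - 1` points lie in a wedge at `z v` of opening `π - δ`; since their pairwise angles at `z v`
are at least `π / n`, this forces `(n - 2) π / n ≤ π - δ`, i.e. `δ ≤ 2π / n`. So each of the at
most `n - 1` maximisers serves an arc of directions of length at most `2π / n`, too little to
cover the circle. Sampling the directions at the `m`-th roots of unity turns this into a
pigeonhole count.
-/

open Real EuclideanGeometry Finset

theorem card_sub_one_mul_le_of_le_abs_sub {ι : Type*} (s : Finset ι) (x : ι → ℝ) {a b ε : ℝ}
    (hab : a ≤ b) (hε : 0 < ε) (hx : ∀ j ∈ s, x j ∈ Set.Icc a b)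
    (hsep : ∀ j ∈ s, ∀ k ∈ s, j ≠ k → ε ≤ |x j - x k|) :
    ((#s : ℝ) - 1) * ε ≤ b - a := by
  set bucket : ι → ℕ := fun j ↦ ⌊(x j - a) / ε⌋₊
  have hmaps : ∀ j ∈ s, bucket j ∈ range (⌊(b - a) / ε⌋₊ + 1) := fun j hj ↦ by
    rw [mem_range, Nat.lt_succ_iff]
    exact Nat.floor_le_floor (by gcongr; exact (hx j hj).2)
  have hinj : Set.InjOn bucket s := by
    intro j hj k hk hjk
    by_contra hne
    have hj0 : 0 ≤ (x j - a) / ε := div_nonneg (sub_nonneg.2 (hx j hj).1) hε.le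
    have hk0 : 0 ≤ (x k - a) / ε := div_nonneg (sub_nonneg.2 (hx k hk).1) hε.le
    have hclose : |(x j - a) / ε - (x k - a) / ε| < 1 := by
      have := Nat.floor_le hj0; have := Nat.lt_floor_add_one ((x j - a) / ε)
      have := Nat.floor_le hk0; have := Nat.lt_floor_add_one ((x k - a) / ε)
      simp only [bucket] at hjk
      rw [abs_lt]; constructor <;> push_cast [hjk] at * <;> linarith
    rw [← sub_div, sub_sub_sub_cancel_right, abs_div, abs_of_pos hε, div_lt_one hε] at hclose
    exact (hsep j hj k hk hne).not_gt hclose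
  have hcard : (#s : ℝ) ≤ ⌊(b - a) / ε⌋₊ + 1 := by
    exact_mod_cast (card_le_card_of_injOn bucket hmaps hinj).trans (card_range _).le
  have hfloor := Nat.floor_le (div_nonneg (sub_nonneg.2 hab) hε.le)
  rw [← le_div_iff₀ hε]
  linarith

theorem Complex.re_mul_exp_mul_I (g : ℂ) (φ : ℝ) :
    (g * exp (φ * I)).re = ‖g‖ * Real.cos (g.arg + φ) := by
  conv_lhs => rw [← norm_mul_exp_arg_mul_I g]
  rw [mul_assoc, ← exp_add, ← add_mul, ← ofReal_add, re_ofReal_mul, exp_ofReal_mul_I_re]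

theorem Complex.abs_arg_le_of_re_mul_exp_nonneg {g : ℂ} (hg : g ≠ 0) {φ : ℝ} (hφ : φ < π / 2)
    (h₁ : 0 ≤ (g * exp (φ * I)).re) (h₂ : 0 ≤ (g * exp (↑(-φ) * I)).re) :
    |g.arg| ≤ π / 2 - φ := by
  have hg' : 0 < ‖g‖ := norm_pos_iff.2 hg
  rw [re_mul_exp_mul_I, mul_nonneg_iff_of_pos_left hg'] at h₁ h₂
  have := neg_pi_lt_arg g
  have := arg_le_pi g
  rw [abs_le]
  constructor
  · by_contra! h
    rw [← Real.cos_neg] at h₂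
    exact h₂.not_gt (Real.cos_neg_of_pi_div_two_lt_of_lt (by linarith) (by linarith))
  · by_contra! h
    exact h₁.not_gt (Real.cos_neg_of_pi_div_two_lt_of_lt (by linarith) (by linarith))

theorem Complex.angle_eq_abs_sub_arg {x y : ℂ} (hx : x ≠ 0) (hy : y ≠ 0)
    (h : |x.arg - y.arg| < π) : InnerProductGeometry.angle x y = |x.arg - y.arg| := by
  rw [angle_eq_abs_arg hx hy, ← arg_coe_angle_toReal_eq_arg, arg_div_coe_angle hx hy,
    ← Real.Angle.coe_sub, Real.Angle.toReal_coe_eq_self_iff.2]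
  rw [abs_lt] at h
  exact ⟨h.1, h.2.le⟩

theorem Complex.card_sub_two_mul_le_of_supporting {ι : Type*} [Fintype ι] [DecidableEq ι]
    {z : ι → ℂ} (hz : Function.Injective z) (v : ι) {ω : ℂ} (hω : ω ≠ 0) {δ ε : ℝ} (hδ₀ : 0 < δ)
    (hδ : δ < π) (hε : 0 < ε)
    (h₁ : ∀ j, (z j * ω).re ≤ (z v * ω).re)
    (h₂ : ∀ j, (z j * (ω * exp (δ * I))).re ≤ (z v * (ω * exp (δ * I))).re)
    (hangle : ∀ j k, j ≠ v → k ≠ v → j ≠ k → ε ≤ ∠ (z j) (z v) (z k)) :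
    ((Fintype.card ι : ℝ) - 2) * ε ≤ π - δ := by
  -- After rotating by `c`, the two supporting half-planes at `z v` cut out the wedge
  -- `|arg| ≤ π/2 - δ/2` around the positive real axis.
  set c : ℂ := -(ω * exp (↑(δ / 2) * I))
  set g : ι → ℂ := fun j ↦ c * (z j - z v)
  have hc : c ≠ 0 := neg_ne_zero.2 (mul_ne_zero hω (exp_ne_zero _))
  have hg : ∀ j, j ≠ v → g j ≠ 0 := fun j hj ↦ mul_ne_zero hc (sub_ne_zero.2 (hz.ne hj))
  have hwedge : ∀ j, j ≠ v → |(g j).arg| ≤ π / 2 - δ / 2 := by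
    intro j hj
    refine abs_arg_le_of_re_mul_exp_nonneg (hg j hj) (by linarith) ?_ ?_
    · have : g j * exp (↑(δ / 2) * I) = -((z j - z v) * (ω * exp (δ * I))) := by
        simp only [g, c]
        rw [show (δ : ℂ) * I = ↑(δ / 2) * I + ↑(δ / 2) * I by push_cast; ring, Complex.exp_add]
        ring
      rw [this, neg_re, sub_mul, sub_re]
      linarith [h₂ j]
    · have : g j * exp (↑(-(δ / 2)) * I) = -((z j - z v) * ω) := by
        simp only [g, c]
        rw [show ((-(δ / 2) : ℝ) : ℂ) * I = -(↑(δ / 2) * I) by push_cast; ring, Complex.exp_neg]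
        field_simp
      rw [this, neg_re, sub_mul, sub_re]
      linarith [h₁ j]
  have hspread := card_sub_one_mul_le_of_le_abs_sub (univ.erase v) (fun j ↦ (g j).arg)
    (a := -(π / 2 - δ / 2)) (b := π / 2 - δ / 2) (by linarith) hε
    (fun j hj ↦ abs_le.1 (hwedge j (ne_of_mem_erase hj))) ?_
  · rw [card_erase_of_mem (mem_univ v), card_univ,
      Nat.cast_pred (Fintype.card_pos_iff.2 ⟨v⟩)] at hspread
    linarith
  intro j hj k hk hjk
  have hj := ne_of_mem_erase hj
  have hk := ne_of_mem_erase hk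
  have hlt : |(g j).arg - (g k).arg| < π := by
    rw [abs_sub_lt_iff]; constructor <;> linarith [abs_le.1 (hwedge j hj), abs_le.1 (hwedge k hk)]
  calc ε ≤ ∠ (z j) (z v) (z k) := hangle j k hj hk hjk
    _ = InnerProductGeometry.angle (g j) (g k) := by
      rw [EuclideanGeometry.angle, vsub_eq_sub, vsub_eq_sub, angle_mul_left hc]
    _ = |(g j).arg - (g k).arg| := angle_eq_abs_sub_arg (hg j hj) (hg k hk) hlt

theorem Complex.le_two_pi_div_of_supporting {n : ℕ} {z : Fin n → ℂ} (hz : Function.Injective z)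
    (hangle : ∀ i j k : Fin n, i ≠ j → j ≠ k → i ≠ k → π / n ≤ ∠ (z i) (z j) (z k))
    {v : Fin n} {ω : ℂ} (hω : ω ≠ 0) {δ : ℝ} (hδ₀ : 0 < δ) (hδ : δ < π)
    (h₁ : ∀ j, (z j * ω).re ≤ (z v * ω).re)
    (h₂ : ∀ j, (z j * (ω * exp (δ * I))).re ≤ (z v * (ω * exp (δ * I))).re) :
    δ ≤ 2 * π / n := by
  have hn : (0 : ℝ) < n := by exact_mod_cast Fin.pos v
  have hspread := card_sub_two_mul_le_of_supporting hz v hω hδ₀ hδ (by positivity) h₁ h₂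
    (fun j k hj hk hjk ↦ hangle j v k hj hk.symm hjk)
  rw [Fintype.card_fin, sub_mul, mul_div_cancel₀ _ hn.ne', ← mul_div_assoc] at hspread
  linarith

theorem ZMod.card_le_of_natAbs_valMinAbs_sub_le {m L : ℕ} [NeZero m] (hL : 3 * L < m)
    {F : Finset (ZMod m)} (hF : ∀ a ∈ F, ∀ b ∈ F, (b - a).valMinAbs.natAbs ≤ L) :
    #F ≤ L + 1 := by
  rcases F.eq_empty_or_nonempty with rfl | ⟨a₀, ha₀⟩
  · simp
  set ρ : ZMod m → ℤ := fun x ↦ (x - a₀).valMinAbs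
  have hρ : ∀ x ∈ F, |ρ x| ≤ L := fun x hx ↦ by
    rw [Int.abs_eq_natAbs]; exact_mod_cast hF a₀ ha₀ x hx
  -- `ρ y - ρ x` and `(y - x).valMinAbs` are congruent mod `m` and differ by at most `3 * L`.
  have hdiff : ∀ x ∈ F, ∀ y ∈ F, ρ y - ρ x ≤ L := by
    intro x hx y hy
    set d := (y - x).valMinAbs
    have hd : |d| ≤ L := by rw [Int.abs_eq_natAbs]; exact_mod_cast hF x hx y hy
    have hdvd : (m : ℤ) ∣ ρ y - ρ x - d := by
      rw [← ZMod.intCast_eq_intCast_iff_dvd_sub]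
      push_cast [d, ρ, coe_valMinAbs]
      ring
    have := Int.eq_zero_of_abs_lt_dvd hdvd (by
      rw [abs_lt]; constructor <;> linarith [abs_le.1 (hρ x hx), abs_le.1 (hρ y hy), abs_le.1 hd])
    linarith [le_abs_self d]
  have hinj : Set.InjOn ρ F := fun x _ y _ hxy ↦ by
    simpa using valMinAbs_inj.1 hxy
  obtain ⟨x₀, hx₀, hmin⟩ := F.exists_min_image ρ ⟨a₀, ha₀⟩
  have hmaps : ∀ x ∈ F, ρ x ∈ Icc (ρ x₀) (ρ x₀ + L) := fun x hx ↦
    mem_Icc.2 ⟨hmin x hx, by linarith [hdiff x₀ hx₀ x hx]⟩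
  have := card_le_card_of_injOn ρ hmaps hinj
  rw [Int.card_Icc] at this
  omega

theorem Complex.exists_forall_re_mul_le_of_mem_convexHull {ι : Type*} {z : ι → ℂ} {s : Finset ι}
    (hs : s.Nonempty) {x : ℂ} (hx : x ∈ convexHull ℝ (z '' s)) (ω : ℂ) :
    ∃ v ∈ s, (x * ω).re ≤ (z v * ω).re ∧ ∀ j ∈ s, (z j * ω).re ≤ (z v * ω).re := by
  obtain ⟨v, hv, hmax⟩ := s.exists_max_image (fun j ↦ (z j * ω).re) hs
  set f : ℂ →ₗ[ℝ] ℝ := Complex.reLm.comp (LinearMap.mulRight ℝ ω)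
  obtain ⟨-, ⟨j, hj, rfl⟩, hxj⟩ :=
    (f.convexOn convex_univ).exists_ge_of_mem_convexHull (Set.subset_univ _) hx
  exact ⟨v, hv, hxj.trans (hmax j hj), hmax⟩

open Complex in
theorem ZMod.stdAddChar_eq_mul_exp_valMinAbs_sub {m : ℕ} [NeZero m] (a b : ZMod m) :
    stdAddChar b = stdAddChar a * exp (↑(2 * π * (b - a).valMinAbs / m) * I) := by
  rw [← add_sub_cancel a b, AddChar.map_add_eq_mul, ← coe_valMinAbs (b - a), stdAddChar_coe,
    add_sub_cancel_left, coe_valMinAbs]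
  congr 2
  push_cast
  ring

open Complex in
theorem ZMod.natAbs_valMinAbs_sub_mul_le_of_supporting {m n : ℕ} [NeZero m] (hm : Odd m)
    {z : Fin n → ℂ} (hz : Function.Injective z)
    (hangle : ∀ i j k : Fin n, i ≠ j → j ≠ k → i ≠ k → π / n ≤ ∠ (z i) (z j) (z k))
    {v : Fin n} {a b : ZMod m}
    (ha : ∀ j, (z j * ZMod.stdAddChar a).re ≤ (z v * ZMod.stdAddChar a).re)
    (hb : ∀ j, (z j * ZMod.stdAddChar b).re ≤ (z v * ZMod.stdAddChar b).re) :
    (b - a).valMinAbs.natAbs * n ≤ m := by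
  set c := (b - a).valMinAbs
  obtain hc | hc := eq_or_ne c 0
  · simp [hc]
  set δ : ℝ := 2 * π * |(c : ℝ)| / m with hδ
  have hrot := ZMod.stdAddChar_eq_mul_exp_valMinAbs_sub a b
  obtain ⟨ω, hω, h₁, h₂⟩ : ∃ ω : ℂ, ω ≠ 0 ∧ (∀ j, (z j * ω).re ≤ (z v * ω).re) ∧
      ∀ j, (z j * (ω * exp (δ * I))).re ≤ (z v * (ω * exp (δ * I))).re := by
    have hne : ∀ t : ZMod m, ZMod.stdAddChar t ≠ 0 := fun t ↦ by
      rw [ZMod.stdAddChar_apply]; exact Circle.coe_ne_zero _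
    obtain hc | hc := hc.lt_or_gt
    · refine ⟨_, hne b, hb, ?_⟩
      rwa [hδ, abs_of_neg (by exact_mod_cast hc), hrot, mul_assoc, ← Complex.exp_add, ← add_mul,
        ← ofReal_add, show 2 * π * c / m + 2 * π * -(c : ℝ) / m = 0 by ring, ofReal_zero,
        zero_mul, Complex.exp_zero, mul_one]
    · refine ⟨_, hne a, ha, ?_⟩
      rwa [hδ, abs_of_pos (by exact_mod_cast hc), ← hrot]
  have hm2 : 2 * c.natAbs < m := by
    have := ZMod.natAbs_valMinAbs_le (b - a)
    rcases hm with ⟨k, rfl⟩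
    omega
  have hcR : (c.natAbs : ℝ) = |(c : ℝ)| := by rw [Nat.cast_natAbs, Int.cast_abs]
  have hm0 : (0 : ℝ) < m := by exact_mod_cast NeZero.pos m
  have hn0 : (0 : ℝ) < n := by exact_mod_cast Fin.pos v
  have hδπ : δ < π := by
    have : (2 * c.natAbs : ℝ) < m := by exact_mod_cast hm2
    rw [hδ, div_lt_iff₀ hm0, ← hcR]
    nlinarith [pi_pos]
  have hδ₀ : 0 < δ := by
    rw [hδ, ← hcR]
    have : 0 < c.natAbs := Int.natAbs_pos.2 hc
    positivity
  have hδn := Complex.le_two_pi_div_of_supporting hz hangle hω hδ₀ hδπ h₁ h₂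
  rw [hδ, ← hcR, div_le_div_iff₀ hm0 hn0] at hδn
  have : (c.natAbs * n : ℝ) ≤ m := by nlinarith [pi_pos]
  exact_mod_cast this

theorem Complex.notMem_convexHull_of_pi_div_le_angle {n : ℕ} (hn : 3 ≤ n) {z : Fin n → ℂ}
    (hz : Function.Injective z)
    (hangle : ∀ i j k : Fin n, i ≠ j → j ≠ k → i ≠ k → π / n ≤ ∠ (z i) (z j) (z k)) (i : Fin n) :
    z i ∉ convexHull ℝ (z '' {j | j ≠ i}) := by
  intro hi
  -- `m` is odd, `3 * (2 * n) < m` and `(n - 1) * (2 * n + 1) < m < n * (2 * n + 1)`.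
  set m := 2 * n ^ 2 + 1
  have hothers : {j | j ≠ i} = ((univ.erase i : Finset (Fin n)) : Set (Fin n)) := by ext; simp
  rw [hothers] at hi
  have hcard : #(univ.erase i) = n - 1 := by simp
  have hsupp (t : ZMod m) : ∃ v ∈ univ.erase i,
      ∀ j, (z j * ZMod.stdAddChar t).re ≤ (z v * ZMod.stdAddChar t).re := by
    obtain ⟨v, hv, hiv, hjv⟩ := Complex.exists_forall_re_mul_le_of_mem_convexHull
      (card_pos.1 (by omega)) hi (ZMod.stdAddChar t)
    refine ⟨v, hv, fun j ↦ ?_⟩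
    obtain rfl | hj := eq_or_ne j i
    exacts [hiv, hjv j (mem_erase.2 ⟨hj, mem_univ j⟩)]
  choose V hVmem hV using hsupp
  obtain ⟨v, -, hfiber⟩ : ∃ v ∈ univ.erase i, 2 * n + 1 < #{t | V t = v} := by
    refine exists_lt_card_fiber_of_mul_lt_card_of_maps_to (fun t _ ↦ hVmem t) ?_
    rw [hcard, card_univ, ZMod.card]
    obtain ⟨k, rfl⟩ := Nat.exists_eq_add_of_le' (by omega : 1 ≤ n)
    simp only [m, Nat.add_sub_cancel]
    nlinarith
  refine hfiber.not_ge <| ZMod.card_le_of_natAbs_valMinAbs_sub_le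
    (show 3 * (2 * n) < 2 * n ^ 2 + 1 by nlinarith) fun a ha b hb ↦ ?_
  rw [mem_filter] at ha hb
  have := ZMod.natAbs_valMinAbs_sub_mul_le_of_supporting (by simp [m]) hz hangle
    (ha.2 ▸ hV a) (hb.2 ▸ hV b)
  simp only [m] at this
  nlinarith

theorem extremal_config_strictly_convex (n : ℕ) (hn : 3 ≤ n)
    (p : Fin n → EuclideanSpace ℝ (Fin 2)) (hp : Function.Injective p)
    (h : ∀ i j k : Fin n, i ≠ j → j ≠ k → i ≠ k → π / n ≤ ∠ (p i) (p j) (p k)) :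
    ∀ i : Fin n, p i ∉ convexHull ℝ (p '' {j : Fin n | j ≠ i}) := by
  intro i hi
  set Φ := Complex.orthonormalBasisOneI.repr.symm
  refine Complex.notMem_convexHull_of_pi_div_le_angle hn (Φ.injective.comp hp)
    (fun i j k hij hjk hik ↦ ?_) i ?_
  · convert h i j k hij hjk hik using 1
    exact Φ.toAffineIsometryEquiv.toAffineIsometry.angle_map _ _ _
  · rw [Function.comp_apply, Set.image_comp]
    convert Set.mem_image_of_mem Φ hi using 1
    exact (Φ.toLinearMap.image_convexHull _).symm
end

section
/- Let d ≥ 1 and let p : Fin n → EuclideanSpace ℝ (Fin d) be an injective family of n points that is equidistant: there exists r > 0 such that dist (p i) (p j) = r for all i ≠ j. Then n ≤ d + 1. -/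
open scoped RealInnerProductSpace

theorem equidistant_card_le (d n : ℕ) (hd : 1 ≤ d)
    (p : Fin n → EuclideanSpace ℝ (Fin d)) (hp : Function.Injective p)
    (r : ℝ) (hr : 0 < r) (h : ∀ i j : Fin n, i ≠ j → dist (p i) (p j) = r) :
    n ≤ d + 1 := by
  rcases Nat.eq_zero_or_pos n with hn | hn
  · omega
  haveI : NeZero n := ⟨hn.ne'⟩
  set v : {i : Fin n // i ≠ 0} → EuclideanSpace ℝ (Fin d) := fun i => p i.1 - p 0 with hv
  have hr2 : (r : ℝ) ^ 2 / 2 ≠ 0 := by positivity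
  have hnorm : ∀ i : {i : Fin n // i ≠ 0}, ‖v i‖ = r := by
    intro i
    have := h i.1 0 i.2
    rwa [dist_eq_norm] at this
  have hinner : ∀ i j : {i : Fin n // i ≠ 0},
      ⟪v i, v j⟫ = if i = j then r ^ 2 else r ^ 2 / 2 := by
    intro i j
    by_cases hij : i = j
    · subst hij
      rw [if_pos rfl, real_inner_self_eq_norm_sq, hnorm i]
    · have hne : (i.1 : Fin n) ≠ j.1 := fun e => hij (Subtype.ext e)
      have hsub : ‖v i - v j‖ = r := by
        have := h i.1 j.1 hne
        rw [dist_eq_norm] at this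
        simpa [hv, sub_sub_sub_cancel_right] using this
      have hpol := norm_sub_sq_real (v i) (v j)
      rw [hnorm i, hnorm j, hsub] at hpol
      simp only [hij, if_false]
      nlinarith [hpol]
  have hli : LinearIndependent ℝ v := by
    rw [Fintype.linearIndependent_iff]
    intro g hg
    set S : ℝ := ∑ i, g i with hS
    have hkey : ∀ j, g j = -S := by
      intro j
      have h0 : ⟪∑ i, g i • v i, v j⟫ = 0 := by rw [hg]; simp
      rw [sum_inner] at h0
      simp only [real_inner_smul_left, hinner] at h0
      have hsplit : ∑ i, g i * (if i = j then r ^ 2 else r ^ 2 / 2)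
          = (S + g j) * (r ^ 2 / 2) := by
        have : ∀ i, g i * (if i = j then r ^ 2 else r ^ 2 / 2)
            = g i * (r ^ 2 / 2) + (if i = j then g i * (r ^ 2 / 2) else 0) := by
          intro i; by_cases hij : i = j <;> simp [hij] <;> ring
        rw [Finset.sum_congr rfl fun i _ => this i, Finset.sum_add_distrib,
          Finset.sum_ite_eq' Finset.univ j (fun i => g i * (r ^ 2 / 2))]
        simp [← Finset.sum_mul, hS]
        ring
      rw [hsplit] at h0
      have := (mul_eq_zero.mp h0).resolve_right hr2
      linarith
    have hS0 : S = 0 := by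
      have : S = ∑ _i : {i : Fin n // i ≠ 0}, (-S) := by
        rw [hS]; exact Finset.sum_congr rfl fun i _ => hkey i
      rw [Finset.sum_const, nsmul_eq_mul] at this
      nlinarith [Finset.card_univ (α := {i : Fin n // i ≠ 0}),
        Nat.cast_nonneg (α := ℝ) (Fintype.card {i : Fin n // i ≠ 0})]
    intro i
    rw [hkey i, hS0, neg_zero]
  have hcard := hli.fintype_card_le_finrank
  rw [finrank_euclideanSpace_fin] at hcard
  have : Fintype.card {i : Fin n // i ≠ 0} = n - 1 := by
    rw [Fintype.card_subtype_compl, Fintype.card_subtype_eq, Fintype.card_fin]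
  omega
end

section
/- Let d ≥ 1 and n ≥ 3. There exists an injective family p : Fin n → EuclideanSpace ℝ (Fin d) of n points such that every angle ∠(p i, p j, p k) over pairwise distinct indices i, j, k is at least π / 3 (equivalently, whose minimum angle equals π / 3) if and only if n ≤ d + 1. -/
/-!
Since the angles of a triangle sum to `π`, a configuration all of whose angles are at least `π / 3`
has only equilateral triangles, so all its points are pairwise at the same distance `r > 0`.
For a weighted difference `v = ∑ wᵢ pᵢ` with `∑ wᵢ = 0` this gives `‖v‖² = r² ∑ wᵢ² / 2`,
so such points are affinely independent and there are at most `d + 1` of them. Conversely, the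
`d` unit vectors of `ℝ^d` together with a suitable point on the diagonal form a regular simplex
with `d + 1` vertices, all of whose angles are `π / 3`.
-/

open Real EuclideanGeometry Function

variable {V P : Type*} [NormedAddCommGroup V] [InnerProductSpace ℝ V] [MetricSpace P]
  [NormedAddTorsor V P]

theorem affineIndependent_of_dist_eq {ι : Type*} {p : ι → P} {r : ℝ} (hr : r ≠ 0)
    (h : ∀ i j, i ≠ j → dist (p i) (p j) = r) : AffineIndependent ℝ p := by
  classical
  intro s w hw hv i hi
  have hdist : ∀ a b, w a * w b * (dist (p a) (p b) * dist (p a) (p b)) =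
      r * r * (w a * w b) - if a = b then r * r * (w a * w b) else 0 := by
    intro a b
    split_ifs with hab
    · simp [hab]
    · rw [h a b hab]; ring
  have hsum : ∑ a ∈ s, ∑ b ∈ s, w a * w b * (dist (p a) (p b) * dist (p a) (p b)) =
      -(r * r * ∑ a ∈ s, w a ^ 2) := by
    simp [hdist, Finset.sum_sub_distrib, ← Finset.mul_sum, hw, sq]
  have hsq : ∑ a ∈ s, w a ^ 2 = 0 := by
    have hinner := inner_weightedVSub (V := V) p hw p hw
    rw [hv, inner_zero_left, hsum] at hinner
    simpa [hr] using hinner.symm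
  exact pow_eq_zero_iff two_ne_zero |>.1 <|
    (Finset.sum_eq_zero_iff_of_nonneg fun a _ => sq_nonneg (w a)).1 hsq i hi

theorem dist_eq_dist_of_pi_div_three_le_angle {p₁ p₂ p₃ : P} (h : p₂ ≠ p₁)
    (h₁ : π / 3 ≤ ∠ p₁ p₂ p₃) (h₂ : π / 3 ≤ ∠ p₂ p₃ p₁) (h₃ : π / 3 ≤ ∠ p₃ p₁ p₂) :
    dist p₂ p₁ = dist p₂ p₃ := by
  have hsum := angle_add_angle_add_angle_eq_pi p₃ h
  refine dist_eq_of_angle_eq_angle_of_angle_ne_pi ?_ ?_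
  · rw [angle_comm]; linarith
  · linarith [pi_pos]

theorem dist_eq_dist_of_forall_pi_div_three_le_angle {ι : Type*} {p : ι → P} (hp : Injective p)
    (hangle : ∀ i j k, i ≠ j → j ≠ k → i ≠ k → π / 3 ≤ ∠ (p i) (p j) (p k))
    {i j k l : ι} (hij : i ≠ j) (hkl : k ≠ l) : dist (p i) (p j) = dist (p k) (p l) := by
  have hvertex : ∀ {a b c}, a ≠ b → a ≠ c → dist (p a) (p b) = dist (p a) (p c) := by
    intro a b c hab hac
    rcases eq_or_ne b c with rfl | hbc
    · rfl
    exact dist_eq_dist_of_pi_div_three_le_angle (hp.ne hab) (hangle b a c hab.symm hac hbc)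
      (hangle a c b hac hbc.symm hab) (hangle c b a hbc.symm hab.symm hac.symm)
  rcases eq_or_ne i k with rfl | hik
  · exact hvertex hij hkl
  · rw [hvertex hij hik, dist_comm, hvertex hik.symm hkl]

theorem affineIndependent_of_forall_pi_div_three_le_angle {ι : Type*} {p : ι → P}
    (hp : Injective p)
    (hangle : ∀ i j k, i ≠ j → j ≠ k → i ≠ k → π / 3 ≤ ∠ (p i) (p j) (p k)) :
    AffineIndependent ℝ p := by
  rcases subsingleton_or_nontrivial ι with hι | hι
  · exact affineIndependent_of_subsingleton ℝ p
  obtain ⟨a, b, hab⟩ := exists_pair_ne ι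
  exact affineIndependent_of_dist_eq (dist_ne_zero.2 (hp.ne hab))
    fun i j hij => dist_eq_dist_of_forall_pi_div_three_le_angle hp hangle hij hab

theorem dist_eq_sqrt_of_norm_sub_sq {E : Type*} [SeminormedAddCommGroup E] {x y : E} {a : ℝ}
    (h : ‖x - y‖ ^ 2 = a) : dist x y = √a := by
  rw [dist_eq_norm, ← h, sqrt_sq (norm_nonneg _)]

/-- The coefficient `t = (1 + √(m + 1)) / m` is the positive root of `m t² = 2 t + 1`, which makes
the last vertex `t • ∑ e k` lie at distance `√2` from every `e i`. -/
noncomputable def regularSimplexVertices {m : ℕ} (e : Fin m → V) : Fin (m + 1) → V :=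
  Fin.snoc e (∑ k, ((1 + √(m + 1)) / m) • e k)

namespace Orthonormal

variable {m : ℕ} {e : Fin m → V}

theorem dist_sum_smul_eq_sqrt_two (he : Orthonormal ℝ e) (i : Fin m) :
    dist (e i) (∑ k, ((1 + √(m + 1)) / m) • e k) = √2 := by
  set t := (1 + √(m + 1)) / m
  have hm : (0 : ℝ) < m := by exact_mod_cast i.pos
  have ht : m * t ^ 2 = 2 * t + 1 := by
    have := sq_sqrt (by positivity : (0 : ℝ) ≤ m + 1)
    simp only [t]
    field_simp
    nlinarith
  apply dist_eq_sqrt_of_norm_sub_sq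
  rw [norm_sub_sq_real, he.norm_eq_one, he.inner_right_fintype, ← real_inner_self_eq_norm_sq,
    he.inner_sum]
  simp only [conj_trivial, Finset.sum_const, Finset.card_univ, Fintype.card_fin, nsmul_eq_mul]
  linear_combination ht

theorem dist_eq_sqrt_two (he : Orthonormal ℝ e) {i j : Fin m} (hij : i ≠ j) :
    dist (e i) (e j) = √2 := by
  apply dist_eq_sqrt_of_norm_sub_sq
  rw [norm_sub_sq_real, he.norm_eq_one, he.norm_eq_one, he.inner_eq_zero hij]
  norm_num

theorem dist_regularSimplexVertices (he : Orthonormal ℝ e) {i j : Fin (m + 1)} (hij : i ≠ j) :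
    dist (regularSimplexVertices e i) (regularSimplexVertices e j) = √2 := by
  induction i using Fin.lastCases with
  | last =>
    induction j using Fin.lastCases with
    | last => exact absurd rfl hij
    | cast j => simpa [regularSimplexVertices, dist_comm] using he.dist_sum_smul_eq_sqrt_two j
  | cast i =>
    induction j using Fin.lastCases with
    | last => simpa [regularSimplexVertices] using he.dist_sum_smul_eq_sqrt_two i
    | cast j =>
      simpa [regularSimplexVertices] using he.dist_eq_sqrt_two (ne_of_apply_ne _ hij)

theorem affineIndependent_regularSimplexVertices (he : Orthonormal ℝ e) :
    AffineIndependent ℝ (regularSimplexVertices e) :=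
  affineIndependent_of_dist_eq (by positivity) fun _ _ => he.dist_regularSimplexVertices

theorem angle_regularSimplexVertices (he : Orthonormal ℝ e) {i j k : Fin (m + 1)} (hij : i ≠ j)
    (hjk : j ≠ k) (hik : i ≠ k) :
    ∠ (regularSimplexVertices e i) (regularSimplexVertices e j) (regularSimplexVertices e k) =
      π / 3 :=
  Affine.Simplex.Equilateral.angle_eq_pi_div_three
    (s := ⟨_, he.affineIndependent_regularSimplexVertices⟩)
    ⟨√2, fun _ _ => he.dist_regularSimplexVertices⟩ hij hik hjk

end Orthonormal

theorem exists_config_angles_ge_pi_div_three_iff_general (d n : ℕ) :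
    (∃ p : Fin n → EuclideanSpace ℝ (Fin d), Function.Injective p ∧
      ∀ i j k : Fin n, i ≠ j → j ≠ k → i ≠ k → π / 3 ≤ ∠ (p i) (p j) (p k)) ↔
    n ≤ d + 1 := by
  constructor
  · rintro ⟨p, hp, hangle⟩
    have hindep := affineIndependent_of_forall_pi_div_three_le_angle hp hangle
    calc n = Fintype.card (Fin n) := (Fintype.card_fin n).symm
      _ ≤ Module.finrank ℝ (vectorSpan ℝ (Set.range p)) + 1 := hindep.card_le_finrank_succ
      _ ≤ d + 1 := by simpa using Submodule.finrank_le (vectorSpan ℝ (Set.range p))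
  · intro hnd
    have he := (EuclideanSpace.basisFun (Fin d) ℝ).orthonormal
    have hcast := Fin.castLE_injective hnd
    refine ⟨regularSimplexVertices (EuclideanSpace.basisFun (Fin d) ℝ) ∘ Fin.castLE hnd,
      he.affineIndependent_regularSimplexVertices.injective.comp hcast,
      fun i j k hij hjk hik => ?_⟩
    exact (he.angle_regularSimplexVertices (hcast.ne hij) (hcast.ne hjk) (hcast.ne hik)).ge

theorem exists_config_angles_ge_pi_div_three_iff (d n : ℕ) (hd : 1 ≤ d) (hn : 3 ≤ n) :
    (∃ p : Fin n → EuclideanSpace ℝ (Fin d), Function.Injective p ∧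
      ∀ i j k : Fin n, i ≠ j → j ≠ k → i ≠ k → π / 3 ≤ ∠ (p i) (p j) (p k)) ↔
    n ≤ d + 1 :=
  exists_config_angles_ge_pi_div_three_iff_general d n
end

section
/- Let d ≥ 1 and n ≥ 3. The supremum, over all injective families p : Fin n → EuclideanSpace ℝ (Fin d), of the minimum angle min { ∠(p i, p j, p k) : i, j, k pairwise distinct } equals π / 3 if and only if n ≤ d + 1. -/
/-!
If `n ≤ d + 1`, the vertices of a regular simplex realise minimum angle `π / 3`, and no
configuration does better since every triangle has an angle at most `π / 3`.

Conversely, if some configuration has all angles within `ε` of `π / 3`, then at the vertex `p 0`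
every angle `∠ (p i) (p 0) (p j)` lies in `[π / 3 - ε, π / 3 + 2ε]`. The unit vectors from `p 0`
towards the other `n - 1` points therefore have Gram matrix within `2ε` of `(I + J) / 2`, whose
quadratic form is at least half the squared norm; for small `ε` they are linearly independent,
so `n - 1 ≤ d`.
-/

open Real EuclideanGeometry
open scoped RealInnerProductSpace

section Angles

variable {V P : Type*} [NormedAddCommGroup V] [InnerProductSpace ℝ V] [MetricSpace P]
  [NormedAddTorsor V P]

theorem angle_le_pi_sub_two_mul_of_le_angle {a b c : P} (hab : a ≠ b) {θ : ℝ}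
    (hc : θ ≤ ∠ b c a) (ha : θ ≤ ∠ c a b) : ∠ a b c ≤ π - 2 * θ := by
  linarith [angle_add_angle_add_angle_eq_pi c hab.symm]

theorem le_pi_div_three_of_le_angle {a b c : P} (hab : a ≠ b) {θ : ℝ}
    (hb : θ ≤ ∠ a b c) (hc : θ ≤ ∠ b c a) (ha : θ ≤ ∠ c a b) : θ ≤ π / 3 := by
  linarith [angle_le_pi_sub_two_mul_of_le_angle hab hc ha]

theorem angle_eq_pi_div_three_of_dist_eq {a b c : P} (hab : a ≠ b)
    (h₁ : dist a b = dist a c) (h₂ : dist b a = dist b c) : ∠ a b c = π / 3 := by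
  have hb := angle_eq_angle_of_dist_eq h₁
  have ha := angle_eq_angle_of_dist_eq h₂
  rw [angle_comm a c b] at hb
  rw [angle_comm b a c] at ha
  linarith [angle_add_angle_add_angle_eq_pi c hab.symm]

def configAngles {ι : Type*} (p : ι → P) : Set ℝ :=
  {θ | ∃ i j k, i ≠ j ∧ j ≠ k ∧ i ≠ k ∧ θ = ∠ (p i) (p j) (p k)}

variable {ι : Type*} {p : ι → P} {θ : ℝ} {i j k : ι}

theorem angle_mem_configAngles (hij : i ≠ j) (hjk : j ≠ k) (hik : i ≠ k) :
    ∠ (p i) (p j) (p k) ∈ configAngles p :=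
  ⟨i, j, k, hij, hjk, hik, rfl⟩

theorem le_pi_div_three_of_mem_lowerBounds_configAngles (hp : Function.Injective p)
    (hij : i ≠ j) (hjk : j ≠ k) (hik : i ≠ k) (hθ : θ ∈ lowerBounds (configAngles p)) :
    θ ≤ π / 3 :=
  le_pi_div_three_of_le_angle (hp.ne hij) (hθ (angle_mem_configAngles hij hjk hik))
    (hθ (angle_mem_configAngles hjk hik.symm hij.symm))
    (hθ (angle_mem_configAngles hik.symm hij hjk.symm))

theorem abs_angle_sub_pi_div_three_le (hp : Function.Injective p)
    (hij : i ≠ j) (hjk : j ≠ k) (hik : i ≠ k) (hθ : θ ∈ lowerBounds (configAngles p)) :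
    |∠ (p i) (p j) (p k) - π / 3| ≤ 2 * (π / 3 - θ) := by
  have hlow := hθ (angle_mem_configAngles (p := p) hij hjk hik)
  have hup := angle_le_pi_sub_two_mul_of_le_angle (hp.ne hij)
    (hθ (angle_mem_configAngles hjk hik.symm hij.symm))
    (hθ (angle_mem_configAngles hik.symm hij hjk.symm))
  have hθ₃ := le_pi_div_three_of_mem_lowerBounds_configAngles hp hij hjk hik hθ
  rw [abs_le]
  constructor <;> linarith

theorem isLeast_configAngles_of_dist_eq {r : ℝ} (hr : r ≠ 0)
    (hp : ∀ i j, i ≠ j → dist (p i) (p j) = r) (hij : i ≠ j) (hjk : j ≠ k) (hik : i ≠ k) :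
    IsLeast (configAngles p) (π / 3) := by
  have hangle : ∀ {a b c}, a ≠ b → b ≠ c → a ≠ c → ∠ (p a) (p b) (p c) = π / 3 :=
    fun hab hbc hac => angle_eq_pi_div_three_of_dist_eq
      (fun h => hr (by rw [← hp _ _ hab, h, dist_self]))
      (by rw [hp _ _ hab, hp _ _ hac]) (by rw [hp _ _ hab.symm, hp _ _ hbc])
  refine ⟨hangle hij hjk hik ▸ angle_mem_configAngles hij hjk hik, ?_⟩
  rintro _ ⟨a, b, c, hab, hbc, hac, rfl⟩
  exact (hangle hab hbc hac).ge

end Angles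

section NearlyEquiangular

variable {V : Type*} [NormedAddCommGroup V] [InnerProductSpace ℝ V]
  {ι : Type*} [Fintype ι] {w : ι → V} {δ : ℝ}

theorem mul_sum_sq_le_norm_sum_smul_sq (hw : ∀ i, ‖w i‖ = 1) (hδ : 0 ≤ δ)
    (h : ∀ i j, i ≠ j → |⟪w i, w j⟫ - 1 / 2| ≤ δ) (g : ι → ℝ) :
    (1 / 2 - Fintype.card ι * δ) * ∑ i, g i ^ 2 ≤ ‖∑ i, g i • w i‖ ^ 2 := by
  classical
  have hterm : ∀ i j, g i * g j / 2 + (if i = j then g i ^ 2 / 2 else 0) - δ * (|g i| * |g j|)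
      ≤ g i * g j * ⟪w i, w j⟫ := by
    intro i j
    by_cases hij : i = j
    · subst hij
      rw [if_pos rfl, real_inner_self_eq_norm_sq, hw, abs_mul_abs_self]
      nlinarith [sq_nonneg (g i)]
    · rw [if_neg hij]
      have hdev : |g i * g j * (⟪w i, w j⟫ - 1 / 2)| ≤ |g i| * |g j| * δ := by
        rw [abs_mul, abs_mul]
        exact mul_le_mul_of_nonneg_left (h i j hij) (by positivity)
      nlinarith [neg_abs_le (g i * g j * (⟪w i, w j⟫ - 1 / 2))]
  have hnorm : ‖∑ i, g i • w i‖ ^ 2 = ∑ i, ∑ j, g i * g j * ⟪w i, w j⟫ := by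
    simp only [← real_inner_self_eq_norm_sq, sum_inner, inner_sum, real_inner_smul_left,
      real_inner_smul_right]
    exact Finset.sum_congr rfl fun i _ => Finset.sum_congr rfl fun j _ => by
      rw [real_inner_comm]; ring
  have hlow := Finset.sum_le_sum fun i (_ : i ∈ Finset.univ) =>
    Finset.sum_le_sum fun j (_ : j ∈ Finset.univ) => hterm i j
  simp only [Finset.sum_sub_distrib, Finset.sum_add_distrib, Finset.sum_ite_eq,
    Finset.mem_univ, if_true, ← Finset.mul_sum, ← Finset.sum_mul, ← Finset.sum_div] at hlow
  have hcs := sq_sum_le_card_mul_sum_sq (s := Finset.univ) (f := fun i => |g i|)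
  simp only [sq_abs, Finset.card_univ] at hcs
  rw [hnorm]
  nlinarith [sq_nonneg (∑ i, g i)]

theorem linearIndependent_of_abs_inner_sub_half_le (hw : ∀ i, ‖w i‖ = 1) (hδ : 0 ≤ δ)
    (hδι : Fintype.card ι * δ < 1 / 2) (h : ∀ i j, i ≠ j → |⟪w i, w j⟫ - 1 / 2| ≤ δ) :
    LinearIndependent ℝ w := by
  refine Fintype.linearIndependent_iff.mpr fun g hg i => ?_
  have hle := mul_sum_sq_le_norm_sum_smul_sq hw hδ h g
  rw [hg, norm_zero, sq, zero_mul] at hle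
  have hzero : ∑ i, g i ^ 2 = 0 :=
    le_antisymm (nonpos_of_mul_nonpos_right hle (by linarith)) (by positivity)
  exact pow_eq_zero_iff two_ne_zero |>.mp
    ((Finset.sum_eq_zero_iff_of_nonneg fun j _ => sq_nonneg (g j)).mp hzero i (Finset.mem_univ i))

theorem inner_inv_norm_smul_eq_cos_angle (x y : V) :
    ⟪‖x‖⁻¹ • x, ‖y‖⁻¹ • y⟫ = Real.cos (InnerProductGeometry.angle x y) := by
  rw [real_inner_smul_left, real_inner_smul_right, InnerProductGeometry.cos_angle]
  ring

theorem card_le_finrank_of_abs_angle_sub_pi_div_three_le {P : Type*} [MetricSpace P]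
    [NormedAddTorsor V P] [FiniteDimensional ℝ V] {q : ι → P} {o : P} (hq : ∀ i, q i ≠ o)
    (hδ : 0 ≤ δ) (hδι : Fintype.card ι * δ < 1 / 2)
    (h : ∀ i j, i ≠ j → |∠ (q i) o (q j) - π / 3| ≤ δ) :
    Fintype.card ι ≤ Module.finrank ℝ V := by
  refine LinearIndependent.fintype_card_le_finrank
    (linearIndependent_of_abs_inner_sub_half_le (w := fun i => ‖q i -ᵥ o‖⁻¹ • (q i -ᵥ o))
      (fun i => norm_smul_inv_norm (vsub_ne_zero.mpr (hq i))) hδ hδι fun i j hij => ?_)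
  rw [inner_inv_norm_smul_eq_cos_angle, ← cos_pi_div_three]
  exact (abs_cos_sub_cos_le _ _).trans (h i j hij)

theorem le_finrank_of_mem_lowerBounds_configAngles {P : Type*} [MetricSpace P]
    [NormedAddTorsor V P] [FiniteDimensional ℝ V] {m : ℕ} {p : Fin (m + 1) → P} {θ : ℝ}
    (hp : Function.Injective p) (hθ : θ ∈ lowerBounds (configAngles p)) (hθ₃ : θ ≤ π / 3)
    (hsmall : 4 * (m + 1) * (π / 3 - θ) < 1) :
    m ≤ Module.finrank ℝ V := by
  have hangle : ∀ a b : Fin m, a ≠ b →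
      |∠ (p a.succ) (p 0) (p b.succ) - π / 3| ≤ 2 * (π / 3 - θ) := fun a b hab =>
    abs_angle_sub_pi_div_three_le hp (Fin.succ_ne_zero a) (Fin.succ_ne_zero b).symm
      (Fin.succ_injective _ |>.ne hab) hθ
  simpa using card_le_finrank_of_abs_angle_sub_pi_div_three_le
    (fun a => hp.ne (Fin.succ_ne_zero a)) (by linarith) (by rw [Fintype.card_fin]; nlinarith)
    hangle

end NearlyEquiangular

theorem exists_injective_dist_eq_sqrt_two {V : Type*} [NormedAddCommGroup V]
    [InnerProductSpace ℝ V] {m : ℕ} {e : Fin m → V} (he : Orthonormal ℝ e) :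
    ∃ p : Fin (m + 1) → V, Function.Injective p ∧ ∀ i j, i ≠ j → dist (p i) (p j) = √2 := by
  -- `c` solves `m c² - 2 c - 1 = 0`, which puts `c • ∑ e` at distance `√2` from every `e i`
  set c : ℝ := -1 / (1 + √(m + 1)) with hc
  have hroot : m * c ^ 2 - 2 * c - 1 = 0 := by
    have hs := Real.sq_sqrt (by positivity : (0 : ℝ) ≤ m + 1)
    have hpos : 0 < 1 + √(m + 1) := by positivity
    rw [hc]
    field_simp
    nlinarith
  have hdist : ∀ {x y : V}, ‖x - y‖ ^ 2 = 2 → dist x y = √2 := fun h => by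
    rw [dist_eq_norm, ← h, Real.sqrt_sq (norm_nonneg _)]
  have hcenter : ∀ i, dist (∑ k, c • e k) (e i) = √2 := fun i => hdist <| by
    rw [norm_sub_sq_real, ← real_inner_self_eq_norm_sq, he.inner_sum, he.inner_left_fintype,
      he.1 i]
    simp only [conj_trivial, Finset.sum_const, Finset.card_univ, Fintype.card_fin, nsmul_eq_mul]
    linarith
  have hbasis : ∀ i j, i ≠ j → dist (e i) (e j) = √2 := fun i j hij => hdist <| by
    rw [norm_sub_sq_real, he.1 i, he.1 j, he.2 hij]
    norm_num
  set p : Fin (m + 1) → V := Fin.cons (∑ k, c • e k) e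
  have hp : ∀ i j, i ≠ j → dist (p i) (p j) = √2 := by
    intro i j hij
    cases i using Fin.cases <;> cases j using Fin.cases
    · exact absurd rfl hij
    · exact hcenter _
    · rw [dist_comm]; exact hcenter _
    · exact hbasis _ _ (ne_of_apply_ne Fin.succ hij)
  refine ⟨p, fun i j hij => by_contra fun hne => ?_, hp⟩
  have h := hp i j hne
  rw [hij, dist_self] at h
  exact (Real.sqrt_pos.mpr two_pos).ne h

theorem maximin_angle_eq_pi_div_three_iff_general (d n : ℕ) (hn : 3 ≤ n) :
    sSup {α : ℝ | ∃ p : Fin n → EuclideanSpace ℝ (Fin d), Function.Injective p ∧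
      IsLeast {θ : ℝ | ∃ i j k : Fin n, i ≠ j ∧ j ≠ k ∧ i ≠ k ∧
        θ = ∠ (p i) (p j) (p k)} α} = π / 3 ↔ n ≤ d + 1 := by
  set S := {α : ℝ | ∃ p : Fin n → EuclideanSpace ℝ (Fin d), Function.Injective p ∧
    IsLeast (configAngles p) α}
  change sSup S = π / 3 ↔ _
  obtain ⟨i, j, k, hij, hik, hjk⟩ :=
    (Fintype.two_lt_card_iff (α := Fin n)).mp (by rw [Fintype.card_fin]; omega)
  have hS : ∀ α ∈ S, α ≤ π / 3 := fun α ⟨p, hp, hα⟩ =>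
    le_pi_div_three_of_mem_lowerBounds_configAngles hp hij hjk hik hα.2
  obtain ⟨m, rfl⟩ : ∃ m, n = m + 1 := ⟨n - 1, by omega⟩
  constructor
  · intro hsup
    have hne : S.Nonempty := Set.nonempty_iff_ne_empty.mpr fun h => by
      rw [h, Real.sSup_empty] at hsup
      linarith [pi_pos]
    have hε : (0 : ℝ) < 1 / (4 * (m + 1)) := by positivity
    obtain ⟨θ, ⟨p, hp, hθ⟩, hlt⟩ :=
      exists_lt_of_lt_csSup hne (by rw [hsup]; linarith : π / 3 - 1 / (4 * (m + 1)) < sSup S)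
    have hsmall : 4 * (m + 1) * (π / 3 - θ) < 1 := (lt_div_iff₀' (by positivity)).mp (by linarith)
    simpa [finrank_euclideanSpace_fin] using
      le_finrank_of_mem_lowerBounds_configAngles hp hθ.2 (hS θ ⟨p, hp, hθ⟩) hsmall
  · intro hnd
    obtain ⟨p, hp, hdist⟩ := exists_injective_dist_eq_sqrt_two
      (EuclideanSpace.orthonormal_single.comp _ (Fin.castLE_injective (by omega : m ≤ d)))
    exact IsGreatest.csSup_eq ⟨⟨p, hp, isLeast_configAngles_of_dist_eq
      (Real.sqrt_pos.mpr two_pos).ne' hdist hij hjk hik⟩, hS⟩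

theorem maximin_angle_eq_pi_div_three_iff (d n : ℕ) (hd : 1 ≤ d) (hn : 3 ≤ n) :
    sSup {α : ℝ | ∃ p : Fin n → EuclideanSpace ℝ (Fin d), Function.Injective p ∧
      IsLeast {θ : ℝ | ∃ i j k : Fin n, i ≠ j ∧ j ≠ k ∧ i ≠ k ∧
        θ = ∠ (p i) (p j) (p k)} α} = π / 3 ↔ n ≤ d + 1 :=
  maximin_angle_eq_pi_div_three_iff_general d n hn
end
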